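/- arXiv:math/9801067 — 6 statements merged into one kernel-verified Lean document; each statement's English description precedes it below -/
import Mathlib

section
/- For row vectors v(1),...,v(2k) in a k-dimensional vector space over a field, and any fixed subset A* of {2,4,...,2k}, the sum over all balanced partitions (A,B) of {1,2,...,2k} into two sets of size k with A ∩ {2,4,...,2k} = A* of det(A)·det(B) equals det({1,3,...,2k-1})·det({2,4,...,2k}), where det(S) for a k-element set S = {s_1 < s_2 < ... < s_k} denotes the determinant of the k×k matrix whose i-th row is v(s_i). -/
/-!
Write `x i = v (2i+1)` and `y i = v (2i+2)`. Every row lies in exactly one of `A` and `B`, so the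
sum is multilinear in the rows. It is alternating in `x`: if `x i = x (i+1)`, exchanging the
roles of `2i+1` and `2i+3` is a sign-reversing involution on the partitions, because moving a
row past the single row `2i+2` changes the sign of exactly one of `‖A‖` and `‖B‖`. Hence the sum
is `c(y) · det x`. For `x = y`, only the partition taking one element of each pair
`{2i+1, 2i+2}` on each side survives, so the sum is `(det y)²` and `c(y) = det y` whenever
`det y ≠ 0`. By multilinearity it suffices to compare `c` with `det` on rows that are standard
basis vectors: if they form a permutation matrix we just saw it, and otherwise three rows
coincide, two of them land on the same side, and both `c` and `det` vanish.
-/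

open Finset

/-- `ddet v S` : the determinant of the `k × k` matrix whose `i`-th row is
`v sᵢ`, where `s₁ < s₂ < ... < s_k` are the elements of `S` (and `0` if
`S` does not have exactly `k` elements). -/
noncomputable def ddet {F : Type*} [Field F] {k : ℕ} (v : ℕ → Fin k → F)
    (S : Finset ℕ) : F :=
  if h : S.card = k then
    Matrix.det (Matrix.of fun i j : Fin k => v (S.orderEmbOfFin h i) j)
  else 0

open Function Equiv

namespace MultilinearMap

variable {R M N : Type*} [CommRing R] [AddCommGroup M] [Module R M] [AddCommGroup N]
  [Module R N] {n : ℕ} (f : MultilinearMap R (fun _ : Fin n => M) N)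

theorem map_comp_swap_of_adjacent
    (hf : ∀ (x : Fin n → M) (i j : Fin n), (j : ℕ) = i + 1 → x i = x j → f x = 0)
    (x : Fin n → M) {i j : Fin n} (hij : (j : ℕ) = i + 1) :
    f (x ∘ swap i j) = -f x := by
  have hne : i ≠ j := fun h => by simp [h] at hij
  set g : M → M → N := fun a b => f (update (update x i a) j b)
  have hzero : ∀ a, g a a = 0 := fun a => hf _ i j hij (by simp [update_of_ne hne])
  have hadd_left : ∀ a a' b, g (a + a') b = g a b + g a' b := fun a a' b => by
    simp only [g, update_comm hne _ b x, f.map_update_add]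
  have hadd_right : ∀ a b b', g a (b + b') = g a b + g a b' := fun a b b' =>
    f.map_update_add _ j b b'
  have hx : g (x i) (x j) = f x := by simp [g]
  have hswap : g (x j) (x i) = f (x ∘ swap i j) := by
    simp only [g, comp_swap_eq_update, update_comm hne]
  have := hzero (x i + x j)
  rw [hadd_left, hadd_right, hadd_right, hzero, hzero, zero_add, add_zero, hx, hswap] at this
  exact eq_neg_of_add_eq_zero_right this

theorem map_eq_zero_of_eq_of_adjacent
    (hf : ∀ (x : Fin n → M) (i j : Fin n), (j : ℕ) = i + 1 → x i = x j → f x = 0)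
    {x : Fin n → M} {i j : Fin n} (hx : x i = x j) (hij : i < j) : f x = 0 := by
  induction hd : (j : ℕ) - i generalizing x j with
  | zero => omega
  | succ d ih =>
    obtain hd0 | hd0 := Nat.eq_zero_or_pos d
    · exact hf x i j (by omega) hx
    set l : Fin n := ⟨j - 1, by omega⟩
    have hlj : (j : ℕ) = l + 1 := by simp [l]; omega
    have hswap := f.map_comp_swap_of_adjacent hf x hlj
    have : f (x ∘ swap l j) = 0 := by
      refine ih (j := l) ?_ (Fin.lt_def.2 (by simp [l]; omega)) (by simp [l]; omega)
      rw [comp_apply, comp_apply, swap_apply_of_ne_of_ne (by grind) (by grind),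
        swap_apply_left, hx]
    rw [this] at hswap
    exact neg_eq_zero.1 hswap.symm

def toAlternatingMapOfAdjacent
    (hf : ∀ (x : Fin n → M) (i j : Fin n), (j : ℕ) = i + 1 → x i = x j → f x = 0) :
    M [⋀^Fin n]→ₗ[R] N where
  toMultilinearMap := f
  map_eq_zero_of_eq' x i j hx hij := by
    rcases hij.lt_or_gt with h | h
    · exact f.map_eq_zero_of_eq_of_adjacent hf hx h
    · exact f.map_eq_zero_of_eq_of_adjacent hf hx.symm h

end MultilinearMap

theorem Finset.map_swap_eq_self {α : Type*} [DecidableEq α] {S : Finset α} {a b : α}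
    (h : a ∈ S ↔ b ∈ S) : S.map (swap a b).toEmbedding = S := by
  ext n
  simp only [mem_map_equiv, symm_swap, swap_apply_def]
  split_ifs <;> grind

section ddet

variable {F : Type*} [Field F] {k : ℕ} {v : ℕ → Fin k → F} {S : Finset ℕ}

theorem ddet_of_card_eq (h : S.card = k) :
    ddet v S = (Matrix.of fun i j => v (S.orderEmbOfFin h i) j).det :=
  dif_pos h

theorem ddet_congr {u : ℕ → Fin k → F} (h : ∀ s ∈ S, v s = u s) : ddet v S = ddet u S := by
  unfold ddet
  split_ifs with hS
  · simp only [h _ (S.orderEmbOfFin_mem hS _)]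
  · rfl

theorem ddet_eq_det_of_strictMono (h : S.card = k) {f : Fin k → ℕ} (hf : ∀ i, f i ∈ S)
    (hmono : StrictMono f) : ddet v S = (Matrix.of fun i j => v (f i) j).det := by
  rw [ddet_of_card_eq h, ← orderEmbOfFin_unique h hf hmono]

theorem ddet_image_of_strictMono {f : Fin k → ℕ} (hmono : StrictMono f) :
    ddet v (univ.image f) = (Matrix.of fun i j => v (f i) j).det :=
  ddet_eq_det_of_strictMono (by simp [card_image_of_injective _ hmono.injective])
    (fun i => mem_image_of_mem f (mem_univ i)) hmono

theorem ddet_eq_zero_of_eq {s t : ℕ} (hs : s ∈ S) (ht : t ∈ S) (hst : s ≠ t)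
    (hv : v s = v t) : ddet v S = 0 := by
  unfold ddet
  split_ifs with h
  · have hrange : ∀ n ∈ S, n ∈ Set.range (S.orderEmbOfFin h) := by simp
    obtain ⟨p, rfl⟩ := hrange s hs
    obtain ⟨q, rfl⟩ := hrange t ht
    exact Matrix.det_zero_of_row_eq (ne_of_apply_ne _ hst) (by ext; simp [hv])
  · rfl

theorem ddet_update_of_notMem {s : ℕ} (hs : s ∉ S) (z : Fin k → F) :
    ddet (update v s z) S = ddet v S :=
  ddet_congr fun _ ht => update_of_ne (ne_of_mem_of_not_mem ht hs) _ _

theorem ddet_update_orderEmbOfFin (h : S.card = k) (p : Fin k) (z : Fin k → F) :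
    ddet (update v (S.orderEmbOfFin h p) z) S
      = ((Matrix.of fun i j => v (S.orderEmbOfFin h i) j).updateRow p z).det := by
  rw [ddet_of_card_eq h]
  congr 1
  ext i j
  rcases eq_or_ne i p with rfl | hip
  · simp
  · simp [hip]

theorem ddet_update_add {s : ℕ} (hs : s ∈ S) (a b : Fin k → F) :
    ddet (update v s (a + b)) S = ddet (update v s a) S + ddet (update v s b) S := by
  by_cases h : S.card = k
  · obtain ⟨p, rfl⟩ : s ∈ Set.range (S.orderEmbOfFin h) := by simpa using hs
    simp only [ddet_update_orderEmbOfFin, Matrix.det_updateRow_add]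
  · simp [ddet, h]

theorem ddet_update_smul {s : ℕ} (hs : s ∈ S) (c : F) (a : Fin k → F) :
    ddet (update v s (c • a)) S = c * ddet (update v s a) S := by
  by_cases h : S.card = k
  · obtain ⟨p, rfl⟩ : s ∈ Set.range (S.orderEmbOfFin h) := by simpa using hs
    simp only [ddet_update_orderEmbOfFin, Matrix.det_updateRow_smul]
  · simp [ddet, h]

theorem ddet_map_eq_sign_mul {τ : Perm ℕ} (hv : ∀ n, v (τ n) = v n) (h : S.card = k)
    (σ : Perm (Fin k)) (hmono : StrictMono (τ ∘ S.orderEmbOfFin h ∘ σ)) :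
    ddet v (S.map τ.toEmbedding) = Perm.sign σ * ddet v S := by
  rw [ddet_eq_det_of_strictMono (by simpa) (fun i => by simp) hmono, ddet_of_card_eq h,
    ← Matrix.det_permute]
  congr 1
  ext i j
  simp [hv]

theorem ddet_map_swap {s t : ℕ} (hv : v s = v t) (ht : t ∉ S)
    (hside : ∀ w ∈ S, w ≠ s → w ≠ t → (w < s ↔ w < t)) :
    ddet v (S.map (swap s t).toEmbedding) = ddet v S := by
  by_cases h : S.card = k
  · have := ddet_map_eq_sign_mul (apply_swap_eq_self hv) h 1 fun i j hij => by
      have hlt := (S.orderEmbOfFin h).strictMono hij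
      have hi := hside _ (S.orderEmbOfFin_mem h i)
      have hj := hside _ (S.orderEmbOfFin_mem h j)
      have hit := ne_of_mem_of_not_mem (S.orderEmbOfFin_mem h i) ht
      have hjt := ne_of_mem_of_not_mem (S.orderEmbOfFin_mem h j) ht
      simp only [comp_apply, Perm.coe_one, id, swap_apply_def]
      split_ifs <;> omega
    simpa using this
  · simp [ddet, h]

theorem ddet_map_swap_of_between {s t w : ℕ} (hv : v s = v t) (hs : s ∈ S) (ht : t ∉ S)
    (hw : w ∈ S) (hsw : s < w ∧ w < t ∨ t < w ∧ w < s)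
    (hside : ∀ z ∈ S, z ≠ s → z ≠ w → z ≠ t → (z < s ↔ z < t)) :
    ddet v (S.map (swap s t).toEmbedding) = -ddet v S := by
  by_cases h : S.card = k
  · set e := S.orderEmbOfFin h
    obtain ⟨p, rfl⟩ : s ∈ Set.range e := by simpa [e] using hs
    obtain ⟨q, rfl⟩ : w ∈ Set.range e := by simpa [e] using hw
    have hpq : p ≠ q := by rintro rfl; omega
    have := ddet_map_eq_sign_mul (apply_swap_eq_self hv) h (swap p q) fun i j hij => by
      have hlt := e.strictMono hij
      have hi := hside _ (S.orderEmbOfFin_mem h i)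
      have hj := hside _ (S.orderEmbOfFin_mem h j)
      have hit := ne_of_mem_of_not_mem (S.orderEmbOfFin_mem h i) ht
      have hjt := ne_of_mem_of_not_mem (S.orderEmbOfFin_mem h j) ht
      have hinj : ∀ a b, e a = e b → a = b := fun a b => e.injective.eq_iff.1
      simp only [comp_apply, swap_apply_def]
      split_ifs <;> grind
    simpa [Perm.sign_swap hpq] using this
  · simp [ddet, h]

end ddet

theorem exists_eq_two_mul_add_of_mem_Icc {k n : ℕ} (hn : n ∈ Icc 1 (2 * k)) :
    ∃ i : Fin k, n = 2 * i + 1 ∨ n = 2 * i + 2 := by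
  rw [mem_Icc] at hn
  exact ⟨⟨(n - 1) / 2, by omega⟩, by simp only; omega⟩

theorem two_mul_add_one_mem_Icc {k : ℕ} (i : Fin k) : 2 * (i : ℕ) + 1 ∈ Icc 1 (2 * k) := by
  simp

theorem two_mul_add_two_mem_Icc {k : ℕ} (i : Fin k) : 2 * (i : ℕ) + 2 ∈ Icc 1 (2 * k) := by
  simp; omega

def evens (k : ℕ) : Finset ℕ := {n ∈ Icc 1 (2 * k) | Even n}

def odds (k : ℕ) : Finset ℕ := {n ∈ Icc 1 (2 * k) | Odd n}

def balancedParts (k : ℕ) (Astar : Finset ℕ) : Finset (Finset ℕ) :=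
  {A ∈ (Icc 1 (2 * k)).powerset | A.card = k ∧ A ∩ evens k = Astar}

noncomputable def crossSum {F : Type*} [Field F] {k : ℕ} (Astar : Finset ℕ)
    (v : ℕ → Fin k → F) : F :=
  ∑ A ∈ balancedParts k Astar, ddet v A * ddet v (Icc 1 (2 * k) \ A)

section crossSum

variable {F : Type*} [Field F] {k : ℕ} {Astar : Finset ℕ} {u v : ℕ → Fin k → F}

theorem mem_balancedParts {A : Finset ℕ} :
    A ∈ balancedParts k Astar ↔ A ⊆ Icc 1 (2 * k) ∧ A.card = k ∧ A ∩ evens k = Astar := by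
  simp [balancedParts]

theorem crossSum_congr (h : ∀ n ∈ Icc 1 (2 * k), u n = v n) :
    crossSum Astar u = crossSum Astar v := by
  refine sum_congr rfl fun A hA => ?_
  have hA := (mem_balancedParts.1 hA).1
  rw [ddet_congr fun n hn => h n (hA hn), ddet_congr fun n hn => h n (sdiff_subset hn)]

theorem crossSum_update_add {r : ℕ} (hr : r ∈ Icc 1 (2 * k)) (a b : Fin k → F) :
    crossSum Astar (update v r (a + b))
      = crossSum Astar (update v r a) + crossSum Astar (update v r b) := by
  rw [crossSum, crossSum, crossSum, ← sum_add_distrib]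
  refine sum_congr rfl fun A _ => ?_
  by_cases hrA : r ∈ A
  · have hrB : r ∉ Icc 1 (2 * k) \ A := fun h => (mem_sdiff.1 h).2 hrA
    simp only [ddet_update_add hrA, ddet_update_of_notMem hrB, add_mul]
  · have hrB : r ∈ Icc 1 (2 * k) \ A := mem_sdiff.2 ⟨hr, hrA⟩
    simp only [ddet_update_add hrB, ddet_update_of_notMem hrA, mul_add]

theorem crossSum_update_smul {r : ℕ} (hr : r ∈ Icc 1 (2 * k)) (c : F) (a : Fin k → F) :
    crossSum Astar (update v r (c • a)) = c * crossSum Astar (update v r a) := by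
  rw [crossSum, crossSum, mul_sum]
  refine sum_congr rfl fun A _ => ?_
  by_cases hrA : r ∈ A
  · have hrB : r ∉ Icc 1 (2 * k) \ A := fun h => (mem_sdiff.1 h).2 hrA
    simp only [ddet_update_smul hrA, ddet_update_of_notMem hrB, mul_assoc]
  · have hrB : r ∈ Icc 1 (2 * k) \ A := mem_sdiff.2 ⟨hr, hrA⟩
    simp only [ddet_update_smul hrB, ddet_update_of_notMem hrA, mul_left_comm]

theorem ddet_mul_ddet_sdiff_eq_zero {I A : Finset ℕ} {r₁ r₂ : ℕ} (h₁ : r₁ ∈ I) (h₂ : r₂ ∈ I)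
    (hne : r₁ ≠ r₂) (hv : v r₁ = v r₂) (hA : r₁ ∈ A ↔ r₂ ∈ A) :
    ddet v A * ddet v (I \ A) = 0 := by
  by_cases hr₁ : r₁ ∈ A
  · rw [ddet_eq_zero_of_eq hr₁ (hA.1 hr₁) hne hv, zero_mul]
  · rw [ddet_eq_zero_of_eq (mem_sdiff.2 ⟨h₁, hr₁⟩) (mem_sdiff.2 ⟨h₂, mt hA.2 hr₁⟩) hne hv,
      mul_zero]

theorem crossSum_eq_zero_of_three_eq {r₁ r₂ r₃ : ℕ} (h₁ : r₁ ∈ Icc 1 (2 * k))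
    (h₂ : r₂ ∈ Icc 1 (2 * k)) (h₃ : r₃ ∈ Icc 1 (2 * k)) (h₁₂ : r₁ ≠ r₂) (h₁₃ : r₁ ≠ r₃)
    (h₂₃ : r₂ ≠ r₃) (hv₁₂ : v r₁ = v r₂) (hv₁₃ : v r₁ = v r₃) : crossSum Astar v = 0 := by
  refine sum_eq_zero fun A _ => ?_
  by_cases hA₁₂ : r₁ ∈ A ↔ r₂ ∈ A
  · exact ddet_mul_ddet_sdiff_eq_zero h₁ h₂ h₁₂ hv₁₂ hA₁₂
  by_cases hA₁₃ : r₁ ∈ A ↔ r₃ ∈ A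
  · exact ddet_mul_ddet_sdiff_eq_zero h₁ h₃ h₁₃ hv₁₃ hA₁₃
  exact ddet_mul_ddet_sdiff_eq_zero h₂ h₃ h₂₃ (hv₁₂.symm.trans hv₁₃) (by tauto)

theorem map_swap_mem_balancedParts {A : Finset ℕ} (hA : A ∈ balancedParts k Astar)
    {a b : ℕ} (ha : a ∈ odds k) (hb : b ∈ odds k) :
    A.map (swap a b).toEmbedding ∈ balancedParts k Astar := by
  obtain ⟨hsub, hcard, hint⟩ := mem_balancedParts.1 hA
  have hodd : ∀ {n}, n ∈ odds k → n ∈ Icc 1 (2 * k) ∧ n ∉ evens k := fun hn => by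
    simp only [odds, evens, mem_filter] at hn ⊢
    exact ⟨hn.1, fun h => Nat.not_even_iff_odd.2 hn.2 h.2⟩
  have hE : ∀ {S : Finset ℕ}, S ⊆ evens k → S.map (swap a b).toEmbedding = S := fun hS =>
    map_swap_eq_self (iff_of_false (mt (@hS a) (hodd ha).2) (mt (@hS b) (hodd hb).2))
  refine mem_balancedParts.2 ⟨?_, by simp [hcard], ?_⟩
  · rw [← map_swap_eq_self (iff_of_true (hodd ha).1 (hodd hb).1)]
    exact map_subset_map.2 hsub
  · rw [← hE subset_rfl, ← map_inter, hint, hE (hint ▸ inter_subset_right)]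

/-- The row `a + 1` lies in exactly one of `A` and its complement, and moving row `a` to `a + 2`
past it flips the sign of that side only. -/
theorem ddet_mul_ddet_sdiff_map_swap {A : Finset ℕ} {a : ℕ} (h₁ : 1 ≤ a) (h₂ : a + 2 ≤ 2 * k)
    (hv : v a = v (a + 2)) (ha : a ∈ A) (ha₂ : a + 2 ∉ A) :
    ddet v (A.map (swap a (a + 2)).toEmbedding)
        * ddet v (Icc 1 (2 * k) \ A.map (swap a (a + 2)).toEmbedding)
      = -(ddet v A * ddet v (Icc 1 (2 * k) \ A)) := by
  have hI : (Icc 1 (2 * k)).map (swap a (a + 2)).toEmbedding = Icc 1 (2 * k) :=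
    map_swap_eq_self (iff_of_true (by simp; omega) (by simp; omega))
  have haB : a ∉ Icc 1 (2 * k) \ A := fun h => (mem_sdiff.1 h).2 ha
  have ha₂B : a + 2 ∈ Icc 1 (2 * k) \ A := mem_sdiff.2 ⟨by simp; omega, ha₂⟩
  rw [show Icc 1 (2 * k) \ A.map (swap a (a + 2)).toEmbedding
      = (Icc 1 (2 * k) \ A).map (swap (a + 2) a).toEmbedding by
    rw [swap_comm (a + 2), Finset.map_sdiff, hI]]
  by_cases hm : a + 1 ∈ A
  · have hmB : a + 1 ∉ Icc 1 (2 * k) \ A := fun h => (mem_sdiff.1 h).2 hm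
    rw [ddet_map_swap_of_between hv ha ha₂ hm (by omega) fun z _ _ _ _ => by omega,
      ddet_map_swap hv.symm haB fun z hz _ _ => by have := ne_of_mem_of_not_mem hz hmB; omega]
    ring
  · have hmB : a + 1 ∈ Icc 1 (2 * k) \ A := mem_sdiff.2 ⟨by simp; omega, hm⟩
    rw [ddet_map_swap_of_between hv.symm ha₂B haB hmB (by omega) fun z _ _ _ _ => by omega,
      ddet_map_swap hv ha₂ fun z hz _ _ => by have := ne_of_mem_of_not_mem hz hm; omega]
    ring

theorem crossSum_eq_zero_of_eq_add_two {a : ℕ} (ha : Odd a) (h : a + 2 ≤ 2 * k)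
    (hv : v a = v (a + 2)) : crossSum Astar v = 0 := by
  set τ := swap a (a + 2)
  have h₁ : 1 ≤ a := ha.pos
  have hI : a ∈ Icc 1 (2 * k) ∧ a + 2 ∈ Icc 1 (2 * k) := by simp only [mem_Icc]; omega
  have hodd : a ∈ odds k ∧ a + 2 ∈ odds k :=
    ⟨mem_filter.2 ⟨hI.1, ha⟩, mem_filter.2 ⟨hI.2, ha.add_even even_two⟩⟩
  have hττ : ∀ A : Finset ℕ, (A.map τ.toEmbedding).map τ.toEmbedding = A := fun A => by
    ext; simp [τ]
  refine sum_involution (fun A _ => A.map τ.toEmbedding) (fun A _ => ?_) (fun A _ hA heq => ?_)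
    (fun A hA => map_swap_mem_balancedParts hA hodd.1 hodd.2) (fun A _ => hττ A)
  · by_cases hA : a ∈ A ↔ a + 2 ∈ A
    · rw [map_swap_eq_self hA, ddet_mul_ddet_sdiff_eq_zero hI.1 hI.2 (by omega) hv hA, add_zero]
    by_cases haA : a ∈ A
    · rw [ddet_mul_ddet_sdiff_map_swap h₁ h hv haA (by tauto), add_neg_cancel]
    · have := ddet_mul_ddet_sdiff_map_swap (A := A.map τ.toEmbedding) h₁ h hv
        (by simp [τ]; tauto) (by simp [τ]; tauto)
      rw [hττ] at this
      rw [this, neg_add_cancel]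
  · have := congrArg (a + 2 ∈ ·) heq
    simp only [mem_map_equiv, τ, symm_swap, swap_apply_right] at this
    exact hA (ddet_mul_ddet_sdiff_eq_zero hI.1 hI.2 (by omega) hv this.to_iff)

end crossSum

/-- Row `2i+1` is `x i` and row `2i+2` is `y i`; the other rows are `0`. -/
def interleave {α : Type*} [Zero α] {k : ℕ} (x y : Fin k → α) (n : ℕ) : α :=
  if h : n ≠ 0 ∧ (n - 1) / 2 < k then (if Even n then y else x) ⟨(n - 1) / 2, h.2⟩ else 0

section interleave

variable {α : Type*} [Zero α] {k : ℕ} (x y : Fin k → α) (i : Fin k)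

@[simp]
theorem interleave_two_mul_add_one : interleave x y (2 * i + 1) = x i := by
  simp [interleave]

@[simp]
theorem interleave_two_mul_add_two : interleave x y (2 * i + 2) = y i := by
  have : (2 * (i : ℕ) + 1) / 2 = i := by omega
  simp [interleave, this, Nat.even_add_one]

theorem interleave_update_left [DecidableEq (Fin k)] (z : α) :
    interleave (update x i z) y = update (interleave x y) (2 * i + 1) z := by
  funext n
  rcases eq_or_ne n (2 * i + 1) with rfl | hn
  · simp
  rw [update_of_ne hn]
  unfold interleave
  split_ifs with h he
  · rfl
  · refine update_of_ne (fun hi => hn ?_) _ _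
    rw [Fin.ext_iff] at hi
    rw [Nat.not_even_iff_odd, Nat.odd_iff] at he
    simp only at hi
    omega
  · rfl

theorem interleave_update_right [DecidableEq (Fin k)] (z : α) :
    interleave x (update y i z) = update (interleave x y) (2 * i + 2) z := by
  funext n
  rcases eq_or_ne n (2 * i + 2) with rfl | hn
  · simp
  rw [update_of_ne hn]
  unfold interleave
  split_ifs with h he
  · refine update_of_ne (fun hi => hn ?_) _ _
    rw [Fin.ext_iff] at hi
    rw [Nat.even_iff] at he
    simp only at hi
    omega
  · rfl
  · rfl

theorem interleave_eq_of_mem_Icc (v : ℕ → α) {n : ℕ} (hn : n ∈ Icc 1 (2 * k)) :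
    interleave (fun i : Fin k => v (2 * i + 1)) (fun i => v (2 * i + 2)) n = v n := by
  obtain ⟨i, rfl | rfl⟩ := exists_eq_two_mul_add_of_mem_Icc hn <;> simp

end interleave

def transversal {k : ℕ} (p : Fin k → Prop) [DecidablePred p] (i : Fin k) : ℕ :=
  if p i then 2 * i + 2 else 2 * i + 1

section transversal

variable {k : ℕ} (p : Fin k → Prop) [DecidablePred p]

theorem transversal_strictMono : StrictMono (transversal p) := fun i j hij => by
  have : (i : ℕ) < j := hij
  unfold transversal
  split_ifs <;> omega

theorem transversal_mem_Icc (i : Fin k) : transversal p i ∈ Icc 1 (2 * k) := by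
  have := i.isLt
  rw [mem_Icc]
  unfold transversal
  split_ifs <;> omega

theorem transversal_eq_iff {i : Fin k} {n : ℕ} :
    transversal p i = n ↔ p i ∧ n = 2 * i + 2 ∨ ¬p i ∧ n = 2 * i + 1 := by
  unfold transversal
  split_ifs <;> simp [*, eq_comm]

theorem transversal_ne_transversal_not (i j : Fin k) :
    transversal p i ≠ transversal (¬p ·) j := by
  rcases eq_or_ne i j with rfl | hij
  · unfold transversal
    by_cases h : p i <;> simp [h]
  · have : (i : ℕ) ≠ j := Fin.val_ne_of_ne hij
    unfold transversal
    split_ifs <;> omega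

theorem sdiff_image_transversal :
    Icc 1 (2 * k) \ univ.image (transversal p) = univ.image (transversal (¬p ·)) := by
  ext n
  simp only [mem_sdiff, mem_image, mem_univ, true_and, not_exists]
  constructor
  · rintro ⟨hn, hnot⟩
    obtain ⟨i, hi⟩ := exists_eq_two_mul_add_of_mem_Icc hn
    refine ⟨i, ?_⟩
    have := hnot i
    unfold transversal at this ⊢
    split_ifs at this ⊢ <;> first | omega | tauto
  · rintro ⟨i, rfl⟩
    exact ⟨transversal_mem_Icc _ i, fun j => transversal_ne_transversal_not p j i⟩

theorem eq_image_transversal {A : Finset ℕ} (hA : A ⊆ Icc 1 (2 * k))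
    (hpair : ∀ i : Fin k, 2 * (i : ℕ) + 1 ∈ A ↔ 2 * (i : ℕ) + 2 ∉ A)
    (hp : ∀ i : Fin k, 2 * (i : ℕ) + 2 ∈ A ↔ p i) : A = univ.image (transversal p) := by
  ext n
  simp only [mem_image, mem_univ, true_and, transversal_eq_iff]
  constructor
  · intro hn
    obtain ⟨i, rfl | rfl⟩ := exists_eq_two_mul_add_of_mem_Icc (hA hn)
    · exact ⟨i, Or.inr ⟨fun h => (hpair i).1 hn ((hp i).2 h), rfl⟩⟩
    · exact ⟨i, Or.inl ⟨(hp i).1 hn, rfl⟩⟩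
  · rintro ⟨i, ⟨hi, rfl⟩ | ⟨hi, rfl⟩⟩
    · exact (hp i).2 hi
    · exact (hpair i).2 (mt (hp i).1 hi)

theorem image_transversal_mem_balancedParts {Astar : Finset ℕ} (hAstar : Astar ⊆ evens k) :
    univ.image (transversal fun i : Fin k => 2 * (i : ℕ) + 2 ∈ Astar)
      ∈ balancedParts k Astar := by
  refine mem_balancedParts.2 ⟨?_, ?_, ?_⟩
  · exact image_subset_iff.2 fun i _ => transversal_mem_Icc _ i
  · rw [card_image_of_injective _ (transversal_strictMono _).injective, card_univ,
      Fintype.card_fin]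
  · ext n
    simp only [mem_inter, mem_image, mem_univ, true_and, transversal_eq_iff, evens, mem_filter]
    constructor
    · rintro ⟨⟨i, ⟨hi, rfl⟩ | ⟨_, rfl⟩⟩, _, he⟩
      · exact hi
      · exact absurd he (by simp [parity_simps])
    · intro hn
      have hn' := hAstar hn
      simp only [evens, mem_filter] at hn'
      obtain ⟨⟨i, rfl | rfl⟩, he⟩ := And.imp_left exists_eq_two_mul_add_of_mem_Icc hn'
      · exact absurd he (by simp [parity_simps])
      · exact ⟨⟨i, Or.inl ⟨hn, rfl⟩⟩, hn'⟩

end transversal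

theorem odds_eq_image (k : ℕ) : odds k = univ.image fun i : Fin k => 2 * (i : ℕ) + 1 := by
  ext n
  simp only [odds, mem_filter, mem_image, mem_univ, true_and]
  constructor
  · rintro ⟨hn, hodd⟩
    obtain ⟨i, rfl | rfl⟩ := exists_eq_two_mul_add_of_mem_Icc hn
    · exact ⟨i, rfl⟩
    · exact absurd hodd (by simp [parity_simps])
  · rintro ⟨i, rfl⟩
    exact ⟨two_mul_add_one_mem_Icc i, odd_two_mul_add_one _⟩

theorem evens_eq_image (k : ℕ) : evens k = univ.image fun i : Fin k => 2 * (i : ℕ) + 2 := by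
  ext n
  simp only [evens, mem_filter, mem_image, mem_univ, true_and]
  constructor
  · rintro ⟨hn, heven⟩
    obtain ⟨i, rfl | rfl⟩ := exists_eq_two_mul_add_of_mem_Icc hn
    · exact absurd heven (by simp [parity_simps])
    · exact ⟨i, rfl⟩
  · rintro ⟨i, rfl⟩
    exact ⟨two_mul_add_two_mem_Icc i, by simp [parity_simps]⟩

noncomputable def crossSumOdd {F : Type*} [Field F] {k : ℕ} (Astar : Finset ℕ)
    (y : Fin k → Fin k → F) : (Fin k → F) [⋀^Fin k]→ₗ[F] F :=
  MultilinearMap.toAlternatingMapOfAdjacent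
    { toFun := fun x => crossSum Astar (interleave x y)
      map_update_add' := fun x i a b => by
        simp only [interleave_update_left, crossSum_update_add (two_mul_add_one_mem_Icc i)]
      map_update_smul' := fun x i c a => by
        simp only [interleave_update_left, crossSum_update_smul (two_mul_add_one_mem_Icc i),
          smul_eq_mul] }
    fun x i j hij hx => by
      change crossSum Astar (interleave x y) = 0
      have := j.isLt
      refine crossSum_eq_zero_of_eq_add_two (odd_two_mul_add_one (i : ℕ)) (by omega) ?_
      rw [show 2 * (i : ℕ) + 1 + 2 = 2 * j + 1 by omega, interleave_two_mul_add_one,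
        interleave_two_mul_add_one, hx]

noncomputable def crossSumEven {F : Type*} [Field F] {k : ℕ} (Astar : Finset ℕ)
    (x : Fin k → Fin k → F) : MultilinearMap F (fun _ : Fin k => Fin k → F) F where
  toFun y := crossSum Astar (interleave x y)
  map_update_add' y i a b := by
    simp only [interleave_update_right, crossSum_update_add (two_mul_add_two_mem_Icc i)]
  map_update_smul' y i c a := by
    simp only [interleave_update_right, crossSum_update_smul (two_mul_add_two_mem_Icc i),
      smul_eq_mul]

section crossSumInterleave

variable {F : Type*} [Field F] {k : ℕ} {Astar : Finset ℕ}

theorem ddet_odds (v : ℕ → Fin k → F) :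
    ddet v (odds k) = (Matrix.of fun (i : Fin k) j => v (2 * i + 1) j).det :=
  odds_eq_image k ▸ ddet_image_of_strictMono fun i j hij => by simp [Fin.lt_def.1 hij]

theorem ddet_evens (v : ℕ → Fin k → F) :
    ddet v (evens k) = (Matrix.of fun (i : Fin k) j => v (2 * i + 2) j).det :=
  evens_eq_image k ▸ ddet_image_of_strictMono fun i j hij => by simp [Fin.lt_def.1 hij]

theorem ddet_interleave_self_image_transversal (y : Fin k → Fin k → F) (p : Fin k → Prop)
    [DecidablePred p] : ddet (interleave y y) (univ.image (transversal p)) = (Matrix.of y).det := by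
  rw [ddet_image_of_strictMono (transversal_strictMono p)]
  congr 1
  ext i j
  rw [Matrix.of_apply, Matrix.of_apply]
  unfold transversal
  split_ifs <;> simp

theorem crossSum_interleave_self (hAstar : Astar ⊆ evens k) (y : Fin k → Fin k → F) :
    crossSum Astar (interleave y y) = (Matrix.of y).det * (Matrix.of y).det := by
  rw [crossSum, sum_eq_single_of_mem _ (image_transversal_mem_balancedParts hAstar)
    fun A hA hne => ?_, sdiff_image_transversal, ddet_interleave_self_image_transversal,
    ddet_interleave_self_image_transversal]
  obtain ⟨hsub, -, hint⟩ := mem_balancedParts.1 hA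
  by_contra hterm
  refine hne (eq_image_transversal _ hsub (fun i => ?_) fun i => ?_)
  · by_contra hpair
    exact hterm (ddet_mul_ddet_sdiff_eq_zero (two_mul_add_one_mem_Icc i)
      (two_mul_add_two_mem_Icc i) (by omega) (by simp) (by tauto))
  · rw [← hint, mem_inter, evens, mem_filter]
    simp [two_mul_add_two_mem_Icc i, parity_simps]

theorem crossSum_interleave_eq_mul_det (x y : Fin k → Fin k → F) :
    crossSum Astar (interleave x y)
      = crossSum Astar (interleave (Pi.basisFun F (Fin k)) y) * (Matrix.of x).det := by
  have := congr($((crossSumOdd Astar y).eq_smul_basis_det (Pi.basisFun F (Fin k))) x)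
  rwa [AlternatingMap.smul_apply, Pi.basisFun_det_apply, smul_eq_mul] at this

theorem det_of_basisFun_comp_ne_zero {c : Fin k → Fin k} (hc : Injective c) :
    (Matrix.of fun i => Pi.basisFun F (Fin k) (c i)).det ≠ 0 := by
  set σ := Equiv.ofBijective c hc.bijective_of_finite
  have : (Matrix.of fun i => Pi.basisFun F (Fin k) (c i))
      = (1 : Matrix (Fin k) (Fin k) F).submatrix σ id := by
    ext i j
    simp [Matrix.one_eq_pi_single, σ]
  rw [this, Matrix.det_permute, Matrix.det_one, mul_one]
  exact ((Perm.sign σ).isUnit.map (Int.castRingHom F)).ne_zero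

theorem crossSum_interleave_basisFun (hAstar : Astar ⊆ evens k) (y : Fin k → Fin k → F) :
    crossSum Astar (interleave (Pi.basisFun F (Fin k)) y) = (Matrix.of y).det := by
  suffices crossSumEven Astar (Pi.basisFun F (Fin k))
      = (Matrix.detRowAlternating : (Fin k → F) [⋀^Fin k]→ₗ[F] F).toMultilinearMap from
    congr($this y)
  refine Module.Basis.ext_multilinear (fun _ => Pi.basisFun F (Fin k)) fun c => ?_
  change crossSum Astar (interleave (Pi.basisFun F (Fin k)) fun i => Pi.basisFun F (Fin k) (c i))
    = (Matrix.of fun i => Pi.basisFun F (Fin k) (c i)).det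
  by_cases hc : Injective c
  · refine mul_right_cancel₀ (det_of_basisFun_comp_ne_zero hc) ?_
    rw [← crossSum_interleave_eq_mul_det, crossSum_interleave_self hAstar]
  · obtain ⟨j₁, j₂, hc, hne⟩ := not_injective_iff.1 hc
    rw [Matrix.det_zero_of_row_eq hne (by ext; simp [hc])]
    refine crossSum_eq_zero_of_three_eq (two_mul_add_two_mem_Icc j₁)
      (two_mul_add_two_mem_Icc j₂) (two_mul_add_one_mem_Icc (c j₁))
      (by simp [Fin.val_inj, hne]) (by omega) (by omega) ?_ ?_ <;> simp [hc]

end crossSumInterleave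

theorem sum_ddet_mul_ddet_eq_general {F : Type*} [Field F] {k : ℕ}
    (v : ℕ → Fin k → F) (Astar : Finset ℕ)
    (hAstar : Astar ⊆ (Finset.Icc 1 (2 * k)).filter (fun x => Even x)) :
    ∑ A ∈ (Finset.Icc 1 (2 * k)).powerset.filter
        (fun A => A.card = k ∧
          A ∩ ((Finset.Icc 1 (2 * k)).filter (fun x => Even x)) = Astar),
      ddet v A * ddet v (Finset.Icc 1 (2 * k) \ A)
    = ddet v ((Finset.Icc 1 (2 * k)).filter (fun x => Odd x)) *
      ddet v ((Finset.Icc 1 (2 * k)).filter (fun x => Even x)) := by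
  set x : Fin k → Fin k → F := fun i => v (2 * i + 1)
  set y : Fin k → Fin k → F := fun i => v (2 * i + 2)
  calc crossSum Astar v
      = crossSum Astar (interleave x y) :=
        crossSum_congr fun n hn => (interleave_eq_of_mem_Icc v hn).symm
    _ = (Matrix.of y).det * (Matrix.of x).det := by
        rw [crossSum_interleave_eq_mul_det, crossSum_interleave_basisFun hAstar]
    _ = ddet v (odds k) * ddet v (evens k) := by
        rw [ddet_odds, ddet_evens, mul_comm]

/-- **Theorem 2 of Propp–Stanley.**  For row vectors `v 1, ..., v (2k)` in a
`k`-dimensional space over a field and any fixed subset `A* ⊆ {2,4,...,2k}`,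
the sum of `‖A‖·‖B‖` over all balanced partitions `(A, B)` of `{1,...,2k}`
(here `B = {1,...,2k} \ A`) with `A ∩ {2,4,...,2k} = A*` equals
`‖{1,3,...,2k-1}‖ · ‖{2,4,...,2k}‖`. -/
theorem sum_ddet_mul_ddet_eq {F : Type*} [Field F] {k : ℕ} (hk : 0 < k)
    (v : ℕ → Fin k → F) (Astar : Finset ℕ)
    (hAstar : Astar ⊆ (Finset.Icc 1 (2 * k)).filter (fun x => Even x)) :
    ∑ A ∈ (Finset.Icc 1 (2 * k)).powerset.filter
        (fun A => A.card = k ∧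
          A ∩ ((Finset.Icc 1 (2 * k)).filter (fun x => Even x)) = Astar),
      ddet v A * ddet v (Finset.Icc 1 (2 * k) \ A)
    = ddet v ((Finset.Icc 1 (2 * k)).filter (fun x => Odd x)) *
      ddet v ((Finset.Icc 1 (2 * k)).filter (fun x => Even x)) :=
  sum_ddet_mul_ddet_eq_general v Astar hAstar
end

section
/- For any fixed subset A* of {2,4,...,2k}, the sum over all balanced partitions (A,B) of {1,2,...,2k} with A ∩ {2,4,...,2k} = A* of (∏_{1≤i<j≤k} (a_j-a_i)/(j-i)) · (∏_{1≤i<j≤k} (b_j-b_i)/(j-i)) equals 2^{k(k-1)}, independent of the choice of A*. -/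
open Finset

/-- The weight of a `k`-element set `S = {s₁ < ... < s_k}` of integers:
`∏_{1 ≤ i < j ≤ k} (s_j - s_i)/(j - i)` (and `0` if `S.card ≠ k`). -/
noncomputable def wt (k : ℕ) (S : Finset ℕ) : ℚ :=
  if h : S.card = k then
    ∏ p ∈ Finset.univ.filter (fun p : Fin k × Fin k => p.1 < p.2),
      (((S.orderEmbOfFin h p.2 : ℕ) : ℚ) - ((S.orderEmbOfFin h p.1 : ℕ) : ℚ)) /
        (((p.2 : ℕ) : ℚ) - ((p.1 : ℕ) : ℚ))
  else 0

/-!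
Write `V(S) = ∏_{i<j} (s_j - s_i)` for the Vandermonde determinant of a sorted set `S`, so
that `wt k S = V(S) / V({0, …, k-1})`. Stack two `k × 2k` blocks with entries `t_c c^s` (top)
and `b_c c^s` (bottom), where `t_c = b_c = 1` for the odd numbers `c`, while an even number has
`t_c = 1, b_c = 0` if it lies in `A*` and `t_c = 0, b_c = 1` otherwise. Laplace expansion along
the top rows gives `∑_A ±V(A) V(Aᶜ)` over the `k`-sets `A`; the weights keep exactly the `A`
with `A ∩ evens = A*`, and the sign `(-1)^(∑ A + k(k-1)/2)` only depends on the number of odd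
elements of `A`, which is `k - #A*`. Subtracting the top rows from the bottom ones kills the odd
columns of the bottom block, and the same expansion leaves the single term `±V(odds) V(evens)`,
which is `±(2^(k(k-1)/2) V({0, …, k-1}))²`. Squaring and positivity of the weights give the
value.
-/

open Matrix Equiv

section Laplace

variable {R : Type*} [CommRing R]

theorem det_eq_zero_of_column_support_card_lt {ι : Type*} [Fintype ι] [DecidableEq ι]
    (M : Matrix ι ι R) {I J : Finset ι} (hM : ∀ j ∈ J, ∀ i ∉ I, M i j = 0)
    (hIJ : #I < #J) : M.det = 0 := by
  rw [det_apply]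
  refine sum_eq_zero fun σ _ => ?_
  obtain ⟨j, hj, hσj⟩ : ∃ j ∈ J, σ j ∉ I := by
    by_contra! h
    exact hIJ.not_ge (card_le_card_of_injOn σ (fun j hj => h j hj) σ.injective.injOn)
  rw [prod_eq_zero (f := fun i => M (σ i) i) (mem_univ j) (hM j hj (σ j) hσj), smul_zero]

variable {m n : ℕ}

theorem card_compl_of_card_eq {S : Finset (Fin (m + n))} (hS : #S = m) : #Sᶜ = n := by
  rw [card_compl, Fintype.card_fin, hS, Nat.add_sub_cancel_left]

noncomputable def shufflePerm (S : Finset (Fin (m + n))) (hS : #S = m) : Perm (Fin (m + n)) :=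
  finSumFinEquiv.symm.trans (finSumEquivOfFinset hS (card_compl_of_card_eq hS))

@[simp]
theorem shufflePerm_castAdd {S : Finset (Fin (m + n))} (hS : #S = m) (i : Fin m) :
    shufflePerm S hS (Fin.castAdd n i) = S.orderEmbOfFin hS i := by
  simp [shufflePerm]

@[simp]
theorem shufflePerm_natAdd {S : Finset (Fin (m + n))} (hS : #S = m) (j : Fin n) :
    shufflePerm S hS (Fin.natAdd m j) = Sᶜ.orderEmbOfFin (card_compl_of_card_eq hS) j := by
  simp [shufflePerm]

def fromRowsOn (S : Finset (Fin (m + n))) (X : Matrix (Fin m) (Fin (m + n)) R)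
    (Y : Matrix (Fin n) (Fin (m + n)) R) : Matrix (Fin (m + n)) (Fin (m + n)) R :=
  of fun r c => if c ∈ S then fromRows X 0 (finSumFinEquiv.symm r) c
    else fromRows 0 Y (finSumFinEquiv.symm r) c

variable (X : Matrix (Fin m) (Fin (m + n)) R) (Y : Matrix (Fin n) (Fin (m + n)) R)

theorem det_fromRows_eq_sum_det_fromRowsOn :
    ((fromRows X Y).submatrix finSumFinEquiv.symm id).det =
      ∑ S : Finset (Fin (m + n)), (fromRowsOn S X Y).det := by
  have hsplit : ((fromRows X Y).submatrix finSumFinEquiv.symm id)ᵀ =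
      ((fromRows X 0).submatrix finSumFinEquiv.symm id)ᵀ +
        ((fromRows 0 Y).submatrix finSumFinEquiv.symm id)ᵀ := by
    ext c r
    obtain ⟨y, rfl⟩ := finSumFinEquiv.surjective r
    cases y <;> simp
  rw [← det_transpose, hsplit]
  refine (detRowAlternating.toMultilinearMap.map_add_univ _ _).trans
    (sum_congr rfl fun S _ => ?_)
  change det (S.piecewise _ _) = _
  rw [← det_transpose (fromRowsOn S X Y)]
  congr 1
  ext c r
  by_cases hc : c ∈ S <;> simp [fromRowsOn, Finset.piecewise, hc]

theorem det_fromRowsOn_of_card_eq {S : Finset (Fin (m + n))} (hS : #S = m) :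
    (fromRowsOn S X Y).det = (Perm.sign (shufflePerm S hS) : R) *
      (X.submatrix id (S.orderEmbOfFin hS)).det *
        (Y.submatrix id (Sᶜ.orderEmbOfFin (card_compl_of_card_eq hS))).det := by
  set σ := shufflePerm S hS
  have hblocks : fromRowsOn S X Y = ((fromBlocks (X.submatrix id (S.orderEmbOfFin hS)) 0 0
      (Y.submatrix id (Sᶜ.orderEmbOfFin (card_compl_of_card_eq hS)))).submatrix
        finSumFinEquiv.symm finSumFinEquiv.symm).submatrix id σ.symm := by
    ext r c
    obtain ⟨x, rfl⟩ := (finSumFinEquiv.trans σ).surjective c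
    obtain ⟨y, rfl⟩ := finSumFinEquiv.surjective r
    simp only [submatrix_apply, Equiv.trans_apply, Equiv.symm_apply_apply, id]
    rcases x with i | j <;> rcases y with i' | j'
    all_goals simp [σ, fromRowsOn,
      mem_compl.mp (Sᶜ.orderEmbOfFin_mem (card_compl_of_card_eq hS) _)]
  rw [hblocks, det_permute', Perm.sign_symm, det_submatrix_equiv_self, det_fromBlocks_zero₂₁,
    mul_assoc]

theorem det_fromRowsOn_of_card_ne {S : Finset (Fin (m + n))} (hS : #S ≠ m) :
    (fromRowsOn S X Y).det = 0 := by
  rcases Nat.lt_or_gt_of_ne hS with hlt | hgt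
  · refine det_eq_zero_of_column_support_card_lt _ (J := Sᶜ) (I := univ.map (Fin.natAddEmb m))
      ?_ ?_
    · intro c hc r hr
      induction r using Fin.addCases with
      | left i => simp [fromRowsOn, mem_compl.mp hc]
      | right j => exact absurd (mem_map_of_mem _ (mem_univ j)) hr
    · rw [card_map, card_univ, Fintype.card_fin, card_compl, Fintype.card_fin]
      omega
  · refine det_eq_zero_of_column_support_card_lt _ (J := S) (I := univ.map (Fin.castAddEmb n))
      ?_ ?_
    · intro c hc r hr
      induction r using Fin.addCases with
      | left i => exact absurd (mem_map_of_mem _ (mem_univ i)) hr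
      | right j => simp [fromRowsOn, hc]
    · rwa [card_map, card_univ, Fintype.card_fin]

theorem det_fromRows_eq_sum :
    ((fromRows X Y).submatrix finSumFinEquiv.symm id).det =
      ∑ S : Finset (Fin (m + n)), if hS : #S = m then
        (Perm.sign (shufflePerm S hS) : R) * (X.submatrix id (S.orderEmbOfFin hS)).det *
          (Y.submatrix id (Sᶜ.orderEmbOfFin (card_compl_of_card_eq hS))).det
      else 0 := by
  rw [det_fromRows_eq_sum_det_fromRowsOn]
  refine sum_congr rfl fun S _ => ?_
  split_ifs with hS
  · exact det_fromRowsOn_of_card_eq X Y hS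
  · exact det_fromRowsOn_of_card_ne X Y hS

end Laplace

section Sign

theorem Finset.card_filter_lt_orderEmbOfFin {α : Type*} [LinearOrder α] (S : Finset α) {k : ℕ}
    (h : #S = k) (i : Fin k) : #{s ∈ S | s < S.orderEmbOfFin h i} = i := by
  have : {s ∈ S | s < S.orderEmbOfFin h i} = (Iio i).map (S.orderEmbOfFin h).toEmbedding := by
    ext s
    simp only [mem_filter, mem_map, mem_Iio, RelEmbedding.coe_toEmbedding]
    constructor
    · rintro ⟨hs, hlt⟩
      obtain ⟨j, rfl⟩ : s ∈ Set.range (S.orderEmbOfFin h) := by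
        rwa [range_orderEmbOfFin]
      exact ⟨j, (S.orderEmbOfFin h).lt_iff_lt.mp hlt, rfl⟩
    · rintro ⟨j, hj, rfl⟩
      exact ⟨S.orderEmbOfFin_mem h j, (S.orderEmbOfFin h).lt_iff_lt.mpr hj⟩
  rw [this, card_map, Fin.card_Iio]

theorem Fin.sum_val_eq_choose_two (m : ℕ) : ∑ i : Fin m, (i : ℕ) = m.choose 2 := by
  rw [Fin.sum_univ_eq_sum_range (fun i => i), sum_range_id, Nat.choose_two_right]

variable {m n : ℕ}

theorem sign_shufflePerm (S : Finset (Fin (m + n))) (hS : #S = m) :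
    Perm.sign (shufflePerm S hS) = (-1) ^ (∑ s ∈ S, (s : ℕ) + m.choose 2) := by
  set s := S.orderEmbOfFin hS
  set t := Sᶜ.orderEmbOfFin (card_compl_of_card_eq hS)
  -- only the pairs `(castAdd i, natAdd j)` can be inversions
  have hinv : Perm.sign (shufflePerm S hS) =
      ∏ i : Fin m, ∏ j : Fin n, if s i < t j then 1 else -1 := by
    rw [Perm.sign_eq_prod_prod_Iio]
    have hlt : ∀ (i : Fin m) (j : Fin n), Fin.castAdd n i < Fin.natAdd m j := fun i j => by
      rw [Fin.lt_def, Fin.val_castAdd, Fin.val_natAdd]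
      omega
    simp_rw [← filter_gt_eq_Iio, prod_filter, Fin.prod_univ_add]
    have hcc : ∀ i i' : Fin m, Fin.castAdd n i < Fin.castAdd n i' ↔ i < i' := fun _ _ => Iff.rfl
    simp +contextual [s, t, hlt, (hlt _ _).not_gt, hcc]
    exact prod_comm
  have hrow : ∀ i : Fin m,
      (∏ j : Fin n, if s i < t j then (1 : ℤˣ) else -1) = (-1) ^ ((s i : ℕ) + i) := by
    intro i
    -- exactly `s i - i` elements of `Sᶜ` lie below `s i`
    have hcount : #{x ∈ S | x < s i} + #{x ∈ Sᶜ | x < s i} = s i := by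
      rw [← card_union_of_disjoint (disjoint_filter_filter disjoint_compl_right),
        ← filter_union, union_compl, filter_gt_eq_Iio, Fin.card_Iio]
    have hcompl : #{j : Fin n | ¬ s i < t j} = #{x ∈ Sᶜ | x < s i} := by
      have hne : ∀ j, t j ≠ s i := fun j h =>
        mem_compl.mp (h ▸ Sᶜ.orderEmbOfFin_mem _ j) (S.orderEmbOfFin_mem hS i)
      rw [← map_orderEmbOfFin_univ Sᶜ (card_compl_of_card_eq hS), filter_map, card_map]
      exact congrArg card (filter_congr fun j _ =>
        not_lt.trans ⟨fun h => h.lt_of_ne (hne j), le_of_lt⟩)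
    rw [card_filter_lt_orderEmbOfFin] at hcount
    rw [prod_ite, prod_const_one, one_mul, prod_const, hcompl,
      show (s i : ℕ) + i = #{x ∈ Sᶜ | x < s i} + 2 * i by omega, pow_add, pow_mul]
    simp
  rw [hinv, prod_congr rfl fun i _ => hrow i, prod_pow_eq_pow_sum, sum_add_distrib,
    Fin.sum_val_eq_choose_two]
  conv_rhs => rw [← map_orderEmbOfFin_univ S hS, sum_map]
  rfl

end Sign

section Vandermonde

variable {R : Type*} [CommRing R]

def weightedPowers {ι : Type*} (k : ℕ) (w x : ι → R) : Matrix (Fin k) ι R :=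
  of fun s c => w c * x c ^ (s : ℕ)

theorem det_weightedPowers_submatrix {ι : Type*} {k : ℕ} (w x : ι → R) (e : Fin k → ι) :
    ((weightedPowers k w x).submatrix id e).det =
      (∏ i, w (e i)) * (vandermonde (x ∘ e)).det := by
  rw [← det_transpose (vandermonde _), ← det_mul_row]
  rfl

theorem weightedPowers_sub {ι : Type*} (k : ℕ) (w w' x : ι → R) :
    weightedPowers k w' x - weightedPowers k w x = weightedPowers k (w' - w) x := by
  ext s c
  simp [weightedPowers, sub_mul]

theorem det_vandermonde_const_mul {n : ℕ} (a : R) (v : Fin n → R) :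
    (vandermonde fun i => a * v i).det = a ^ n.choose 2 * (vandermonde v).det := by
  rw [← Fin.sum_val_eq_choose_two, ← prod_pow_eq_pow_sum, ← det_mul_row]
  congr 1
  ext i j
  simp [mul_pow]

theorem det_fromRows_sub_self {m : ℕ} (X Y : Matrix (Fin m) (Fin (m + m)) R) :
    ((fromRows X (Y - X)).submatrix finSumFinEquiv.symm id).det =
      ((fromRows X Y).submatrix finSumFinEquiv.symm id).det := by
  have hL : fromRows X (Y - X) =
      (fromBlocks 1 0 (-1) 1 : Matrix (Fin m ⊕ Fin m) (Fin m ⊕ Fin m) R) * fromRows X Y := by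
    rw [fromBlocks_mul_fromRows]
    simp [sub_eq_neg_add]
  rw [hL, ← submatrix_mul_equiv _ _ _ finSumFinEquiv.symm, det_mul, det_submatrix_equiv_self,
    det_fromBlocks_zero₁₂, det_one, one_mul, one_mul]

end Vandermonde

theorem det_vandermonde_pos {R : Type*} [CommRing R] [LinearOrder R] [IsStrictOrderedRing R]
    {n : ℕ} {v : Fin n → R} (hv : StrictMono v) : 0 < (vandermonde v).det := by
  rw [det_vandermonde]
  exact prod_pos fun i _ => prod_pos fun j hj => sub_pos.mpr (hv (mem_Ioi.mp hj))

theorem Finset.prod_orderEmbOfFin {α M : Type*} [LinearOrder α] [CommMonoid M] (S : Finset α)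
    {k : ℕ} (h : #S = k) (f : α → M) : ∏ i, f (S.orderEmbOfFin h i) = ∏ a ∈ S, f a := by
  conv_rhs => rw [← map_orderEmbOfFin_univ S h, prod_map]
  rfl

theorem Finset.orderEmbOfFin_map {α β : Type*} [LinearOrder α] [LinearOrder β] (S : Finset α)
    (f : α ↪o β) {k : ℕ} (h : #S = k) (i : Fin k) :
    (S.map f.toEmbedding).orderEmbOfFin ((card_map _).trans h) i = f (S.orderEmbOfFin h i) := by
  have := orderEmbOfFin_unique' ((card_map _).trans h) (f := (S.orderEmbOfFin h).trans f)
    fun j => mem_map_of_mem _ (S.orderEmbOfFin_mem h j)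
  rw [← this]
  rfl

theorem Fin.prod_filter_lt {M : Type*} [CommMonoid M] {k : ℕ} (f : Fin k → Fin k → M) :
    ∏ p ∈ univ.filter (fun p : Fin k × Fin k => p.1 < p.2), f p.1 p.2 =
      ∏ i, ∏ j ∈ Ioi i, f i j := by
  rw [prod_filter, Fintype.prod_prod_type]
  simp_rw [← filter_lt_eq_Ioi, prod_filter]

theorem wt_eq_det_div {k : ℕ} {A : Finset ℕ} (h : #A = k) :
    wt k A = (vandermonde fun i => ((A.orderEmbOfFin h i : ℕ) : ℚ)).det /
      (vandermonde fun i : Fin k => ((i : ℕ) : ℚ)).det := by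
  rw [wt, dif_pos h, det_vandermonde, det_vandermonde, ← prod_div_distrib]
  simp_rw [← prod_div_distrib]
  exact Fin.prod_filter_lt fun i j =>
    (((A.orderEmbOfFin h j : ℕ) : ℚ) - ((A.orderEmbOfFin h i : ℕ) : ℚ)) /
      (((j : ℕ) : ℚ) - ((i : ℕ) : ℚ))

theorem det_vandermonde_val_pos (k : ℕ) :
    0 < (vandermonde fun i : Fin k => ((i : ℕ) : ℚ)).det :=
  det_vandermonde_pos fun _ _ h => by exact_mod_cast h

theorem wt_nonneg (k : ℕ) (A : Finset ℕ) : 0 ≤ wt k A := by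
  by_cases h : #A = k
  · rw [wt_eq_det_div h]
    refine div_nonneg (det_vandermonde_pos fun a b hab => ?_).le (det_vandermonde_val_pos k).le
    exact_mod_cast (A.orderEmbOfFin h).strictMono hab
  · simp [wt, h]

def Fin.valSucc (N : ℕ) : Fin N ↪o ℕ :=
  OrderEmbedding.ofStrictMono (fun c => (c : ℕ) + 1) fun _ _ h => Nat.add_lt_add_right h 1

@[simp]
theorem Fin.valSucc_apply {N : ℕ} (c : Fin N) : Fin.valSucc N c = (c : ℕ) + 1 := rfl

theorem det_vandermonde_orderEmbOfFin {N k : ℕ} (S : Finset (Fin N)) (h : #S = k) :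
    (vandermonde ((fun c : Fin N => ((c : ℕ) : ℚ)) ∘ S.orderEmbOfFin h)).det =
      wt k (S.map (Fin.valSucc N).toEmbedding) *
        (vandermonde fun i : Fin k => ((i : ℕ) : ℚ)).det := by
  rw [wt_eq_det_div ((card_map _).trans h), div_mul_cancel₀ _ (det_vandermonde_val_pos k).ne']
  rw [← det_vandermonde_add _ 1]
  congr
  ext i
  simp [orderEmbOfFin_map S _ h]

theorem neg_one_pow_sum_eq_pow_card_filter_odd {ι M : Type*} [CommMonoid M] [HasDistribNeg M]
    (s : Finset ι) (f : ι → ℕ) :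
    (-1 : M) ^ (∑ i ∈ s, f i) = (-1) ^ #{i ∈ s | Odd (f i)} := by
  rw [← prod_pow_eq_pow_sum, ← prod_filter_mul_prod_filter_not s (fun i => Odd (f i)),
    prod_congr rfl fun i hi => (mem_filter.mp hi).2.neg_one_pow,
    prod_congr rfl fun i hi => (Nat.not_odd_iff_even.mp (mem_filter.mp hi).2).neg_one_pow,
    prod_const, prod_const_one, mul_one]

section Stacked

variable (k : ℕ) (F : Finset (Fin (k + k)))

/-- Column `c` stands for the number `c + 1`, so these are the columns of the even numbers. -/
def oddCols : Finset (Fin (k + k)) := {c | Odd (c : ℕ)}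

def oddColsEmb : Fin k ↪o Fin (k + k) :=
  OrderEmbedding.ofStrictMono (fun i => ⟨2 * i + 1, by omega⟩) fun a b h =>
    Fin.mk_lt_mk.mpr (by have := Fin.lt_def.mp h; omega)

def evenColsEmb : Fin k ↪o Fin (k + k) :=
  OrderEmbedding.ofStrictMono (fun i => ⟨2 * i, by omega⟩) fun a b h =>
    Fin.mk_lt_mk.mpr (by have := Fin.lt_def.mp h; omega)

@[simp]
theorem oddColsEmb_apply (i : Fin k) : (oddColsEmb k i : ℕ) = 2 * i + 1 := rfl

@[simp]
theorem evenColsEmb_apply (i : Fin k) : (evenColsEmb k i : ℕ) = 2 * i := rfl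

theorem oddCols_eq_map : oddCols k = univ.map (oddColsEmb k).toEmbedding := by
  ext c
  simp only [oddCols, mem_filter, mem_univ, true_and, mem_map, RelEmbedding.coe_toEmbedding]
  constructor
  · rintro ⟨r, hr⟩
    exact ⟨⟨r, by omega⟩, Fin.ext (by simp [hr])⟩
  · rintro ⟨i, rfl⟩
    exact ⟨i, rfl⟩

theorem compl_oddCols_eq_map : (oddCols k)ᶜ = univ.map (evenColsEmb k).toEmbedding := by
  ext c
  simp only [oddCols, compl_filter, mem_filter, mem_univ, true_and, mem_map,
    RelEmbedding.coe_toEmbedding, Nat.not_odd_iff_even]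
  constructor
  · rintro ⟨r, hr⟩
    exact ⟨⟨r, by omega⟩, Fin.ext (by simp [hr]; omega)⟩
  · rintro ⟨i, rfl⟩
    exact ⟨i, by simp; omega⟩

theorem card_oddCols : #(oddCols k) = k := by
  rw [oddCols_eq_map, card_map, card_univ, Fintype.card_fin]

theorem card_compl_oddCols : #(oddCols k)ᶜ = k := by
  rw [compl_oddCols_eq_map, card_map, card_univ, Fintype.card_fin]

def topWeight (c : Fin (k + k)) : ℚ := if c ∉ oddCols k \ F then 1 else 0

def bottomWeight (c : Fin (k + k)) : ℚ := if c ∉ F then 1 else 0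

def stackedMatrix : Matrix (Fin (k + k)) (Fin (k + k)) ℚ :=
  (fromRows (weightedPowers k (topWeight k F) fun c => ((c : ℕ) : ℚ))
    (weightedPowers k (bottomWeight k F) fun c => ((c : ℕ) : ℚ))).submatrix
      finSumFinEquiv.symm id

theorem orderEmbOfFin_oddCols (h : #(oddCols k) = k) :
    (oddCols k).orderEmbOfFin h = oddColsEmb k :=
  (orderEmbOfFin_unique' h fun i => by
    rw [oddCols_eq_map]
    exact mem_map_of_mem _ (mem_univ i)).symm

theorem orderEmbOfFin_compl_oddCols (h : #(oddCols k)ᶜ = k) :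
    (oddCols k)ᶜ.orderEmbOfFin h = evenColsEmb k :=
  (orderEmbOfFin_unique' h fun i => by
    rw [compl_oddCols_eq_map]
    exact mem_map_of_mem _ (mem_univ i)).symm

theorem det_vandermonde_oddCols (h : #(oddCols k) = k) :
    (vandermonde ((fun c : Fin (k + k) => ((c : ℕ) : ℚ)) ∘ (oddCols k).orderEmbOfFin h)).det =
      2 ^ k.choose 2 * (vandermonde fun i : Fin k => ((i : ℕ) : ℚ)).det := by
  rw [orderEmbOfFin_oddCols, ← det_vandermonde_const_mul, ← det_vandermonde_sub _ 1]
  congr 2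
  ext i
  simp

theorem det_vandermonde_compl_oddCols (h : #(oddCols k)ᶜ = k) :
    (vandermonde ((fun c : Fin (k + k) => ((c : ℕ) : ℚ)) ∘
      (oddCols k)ᶜ.orderEmbOfFin h)).det =
      2 ^ k.choose 2 * (vandermonde fun i : Fin k => ((i : ℕ) : ℚ)).det := by
  rw [orderEmbOfFin_compl_oddCols, ← det_vandermonde_const_mul]
  congr 2
  ext i
  simp

variable {k F}

theorem inter_oddCols_eq_iff (hF : F ⊆ oddCols k) (S : Finset (Fin (k + k))) :
    S ∩ oddCols k = F ↔ (∀ c ∈ S, c ∉ oddCols k \ F) ∧ ∀ c ∈ Sᶜ, c ∉ F := by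
  simp only [Finset.ext_iff, mem_inter, mem_sdiff, mem_compl]
  grind

theorem det_stackedMatrix (hF : F ⊆ oddCols k) :
    (stackedMatrix k F).det =
      (-1) ^ (#F + k.choose 2) * (vandermonde fun i : Fin k => ((i : ℕ) : ℚ)).det ^ 2 *
        ∑ S with #S = k ∧ S ∩ oddCols k = F,
          wt k (S.map (Fin.valSucc _).toEmbedding) *
            wt k (Sᶜ.map (Fin.valSucc _).toEmbedding) := by
  rw [stackedMatrix, det_fromRows_eq_sum, sum_filter, mul_sum]
  refine sum_congr rfl fun S _ => ?_
  by_cases hS : #S = k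
  · rw [dif_pos hS, det_weightedPowers_submatrix, det_weightedPowers_submatrix,
      prod_orderEmbOfFin, prod_orderEmbOfFin, det_vandermonde_orderEmbOfFin,
      det_vandermonde_orderEmbOfFin, sign_shufflePerm]
    simp only [topWeight, bottomWeight, prod_boole]
    by_cases hw : (∀ c ∈ S, c ∉ oddCols k \ F) ∧ ∀ c ∈ Sᶜ, c ∉ F
    · -- the sign `(-1) ^ (∑ S + k.choose 2)` only depends on `#(S ∩ oddCols k) = #F`
      have hSF := (inter_oddCols_eq_iff hF S).mpr hw
      have hodd : S.filter (fun c : Fin (k + k) => Odd (c : ℕ)) = F := by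
        rw [← hSF]
        ext c
        simp [oddCols]
      rw [if_pos hw.1, if_pos hw.2, if_pos ⟨hS, hSF⟩, pow_add,
        neg_one_pow_sum_eq_pow_card_filter_odd, hodd]
      push_cast
      ring
    · rw [if_neg (show ¬(#S = k ∧ S ∩ oddCols k = F) from
        fun h => hw ((inter_oddCols_eq_iff hF S).mp h.2))]
      rcases not_and_or.mp hw with h | h <;> rw [if_neg h] <;> ring
  · rw [dif_neg hS, if_neg fun h => hS h.1, mul_zero]

theorem det_stackedMatrix_sq (hF : F ⊆ oddCols k) :
    (stackedMatrix k F).det ^ 2 =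
      (2 ^ k.choose 2 * (vandermonde fun i : Fin k => ((i : ℕ) : ℚ)).det) ^ 4 := by
  have hOc := card_compl_oddCols k
  -- once the top rows are subtracted from the bottom ones, only `S = (oddCols k)ᶜ` survives
  rw [stackedMatrix, ← det_fromRows_sub_self, weightedPowers_sub, det_fromRows_eq_sum,
    sum_eq_single_of_mem (oddCols k)ᶜ (mem_univ _), dif_pos hOc]
  · rw [det_weightedPowers_submatrix, det_weightedPowers_submatrix, prod_orderEmbOfFin,
      prod_orderEmbOfFin, det_vandermonde_compl_oddCols]
    simp only [compl_compl]
    rw [det_vandermonde_oddCols]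
    have hsign : ((Perm.sign (shufflePerm _ hOc) : ℤ) : ℚ) ^ 2 = 1 := by
      rw [← Int.cast_pow, ← Units.val_pow_eq_pow_val, Int.units_sq]
      rfl
    have htop : ∏ c ∈ (oddCols k)ᶜ, topWeight k F c = 1 :=
      prod_eq_one fun c hc => if_pos fun h => mem_compl.mp hc (mem_sdiff.mp h).1
    have hdiff : (∏ c ∈ oddCols k, (bottomWeight k F - topWeight k F) c) ^ 2 = 1 := by
      rw [← prod_pow]
      refine prod_eq_one fun c hc => ?_
      by_cases hcF : c ∈ F <;> simp [topWeight, bottomWeight, hc, hcF]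
    simp only [htop, one_mul, mul_pow, hsign, hdiff]
    ring
  · intro S _ hSO
    by_cases hS : #S = k
    · obtain ⟨c, hc, hcO⟩ : ∃ c ∈ Sᶜ, c ∉ oddCols k := by
        by_contra! h
        refine hSO (compl_eq_comm.mp (eq_of_subset_of_card_le h ?_)).symm
        rw [card_compl_of_card_eq hS, card_oddCols]
      have hzero : (bottomWeight k F - topWeight k F) c = 0 := by
        have hcF : c ∉ F := fun h => hcO (hF h)
        simp [topWeight, bottomWeight, hcO, hcF]
      rw [dif_pos hS, det_weightedPowers_submatrix, det_weightedPowers_submatrix,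
        prod_orderEmbOfFin, prod_orderEmbOfFin, prod_eq_zero hc hzero]
      ring
    · rw [dif_neg hS]

end Stacked

theorem Finset.sum_filter_powerset_map {α β M : Type*} [DecidableEq β] [AddCommMonoid M]
    (s : Finset α) (f : α ↪ β) (p : Finset β → Prop) [DecidablePred p]
    (g : Finset β → M) :
    ∑ A ∈ (s.map f).powerset with p A, g A =
      ∑ S ∈ s.powerset with p (S.map f), g (S.map f) := by
  have : (s.map f).powerset = s.powerset.map (mapEmbedding f).toEmbedding := by
    ext A
    simp only [mem_powerset, subset_map_iff, mem_map, RelEmbedding.coe_toEmbedding,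
      mapEmbedding_apply]
    exact ⟨fun ⟨u, hu, hA⟩ => ⟨u, hu, hA.symm⟩,
      fun ⟨u, hu, hA⟩ => ⟨u, hu, hA.symm⟩⟩
  rw [this, filter_map, sum_map]
  rfl

theorem sum_wt_mul_wt_eq_of_subset_oddCols {k : ℕ} {F : Finset (Fin (k + k))}
    (hF : F ⊆ oddCols k) :
    ∑ S with #S = k ∧ S ∩ oddCols k = F,
      wt k (S.map (Fin.valSucc _).toEmbedding) * wt k (Sᶜ.map (Fin.valSucc _).toEmbedding) =
        2 ^ (k * (k - 1)) := by
  set P := ∑ S with #S = k ∧ S ∩ oddCols k = F,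
    wt k (S.map (Fin.valSucc _).toEmbedding) * wt k (Sᶜ.map (Fin.valSucc _).toEmbedding)
  set D := (vandermonde fun i : Fin k => ((i : ℕ) : ℚ)).det
  have hD : 0 < D := det_vandermonde_val_pos k
  have hP : 0 ≤ P := sum_nonneg fun S _ => mul_nonneg (wt_nonneg k _) (wt_nonneg k _)
  have hsign : ((-1 : ℚ) ^ (#F + k.choose 2)) ^ 2 = 1 := by
    rw [← pow_mul, mul_comm, pow_mul, neg_one_sq, one_pow]
  have hdet := det_stackedMatrix_sq hF
  rw [det_stackedMatrix hF] at hdet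
  have hexp : k * (k - 1) = 2 * k.choose 2 := by
    rw [Nat.choose_two_right, Nat.mul_div_cancel' (Nat.even_mul_pred_self k).two_dvd]
  refine (sq_eq_sq₀ hP (by positivity)).mp (mul_right_cancel₀ (pow_ne_zero 4 hD.ne') ?_)
  rw [hexp]
  linear_combination hdet - P ^ 2 * D ^ 4 * hsign

theorem sum_wt_mul_wt_fixed_evens_general (k : ℕ) (Astar : Finset ℕ)
    (hAstar : Astar ⊆ (Finset.Icc 1 (2 * k)).filter (fun x => Even x)) :
    ∑ A ∈ (Finset.Icc 1 (2 * k)).powerset.filter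
        (fun A => A.card = k ∧
          A ∩ ((Finset.Icc 1 (2 * k)).filter (fun x => Even x)) = Astar),
      wt k A * wt k (Finset.Icc 1 (2 * k) \ A) = 2 ^ (k * (k - 1)) := by
  set f := (Fin.valSucc (k + k)).toEmbedding
  have hIcc : Icc 1 (2 * k) = univ.map f := by
    ext x
    simp only [mem_Icc, mem_map, mem_univ, true_and, f, RelEmbedding.coe_toEmbedding,
      Fin.valSucc_apply]
    exact ⟨fun hx => ⟨⟨x - 1, by omega⟩, by simp; omega⟩, by rintro ⟨c, rfl⟩; omega⟩
  have hEven : (Icc 1 (2 * k)).filter (fun x => Even x) = (oddCols k).map f := by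
    rw [hIcc, filter_map]
    congr 1
    ext c
    simp [oddCols, f, Nat.even_add_one]
  obtain ⟨F, hF, rfl⟩ := subset_map_iff.mp (hEven ▸ hAstar)
  rw [hEven, hIcc, sum_filter_powerset_map, powerset_univ]
  refine (sum_congr (filter_congr fun S _ => ?_) fun S _ => ?_).trans
    (sum_wt_mul_wt_eq_of_subset_oddCols hF)
  · rw [card_map, ← map_inter, map_inj]
  · rw [← Finset.map_sdiff, compl_eq_univ_sdiff]

/-- For any fixed `A* ⊆ {2,4,...,2k}`, the sum of `wt A · wt B` over all
balanced partitions `(A, B)` of `{1,...,2k}` with `A ∩ {2,4,...,2k} = A*`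
equals `2^(k(k-1))`, independently of `A*`. -/
theorem sum_wt_mul_wt_fixed_evens (k : ℕ) (hk : 0 < k) (Astar : Finset ℕ)
    (hAstar : Astar ⊆ (Finset.Icc 1 (2 * k)).filter (fun x => Even x)) :
    ∑ A ∈ (Finset.Icc 1 (2 * k)).powerset.filter
        (fun A => A.card = k ∧
          A ∩ ((Finset.Icc 1 (2 * k)).filter (fun x => Even x)) = Astar),
      wt k A * wt k (Finset.Icc 1 (2 * k) \ A) = 2 ^ (k * (k - 1)) :=
  sum_wt_mul_wt_fixed_evens_general k Astar hAstar
end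

section
/- For a k-element subset A = {a_1 < a_2 < ... < a_k} of the positive integers, the product ∏_{1≤i<j≤k} (a_j - a_i)/(j - i) equals the number of semistandard Young tableaux of shape λ = (a_k - k, a_{k-1} - (k-1), ..., a_1 - 1) with entries at most k. -/
open Finset

/-- A semistandard Young tableau with entries in `{1, ..., k}` of the shape
whose `i`-th row (0-indexed) has length `ρ i`: entries weakly increase along
rows and strictly increase down columns. Entries outside the shape are `0`. -/
structure SSYT (k : ℕ) (ρ : ℕ → ℕ) where
  entry : ℕ → ℕ → ℕ
  zero_outside : ∀ i j, ρ i ≤ j → entry i j = 0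
  one_le : ∀ i j, j < ρ i → 1 ≤ entry i j
  le_k : ∀ i j, j < ρ i → entry i j ≤ k
  row_weak : ∀ i j₁ j₂, j₁ ≤ j₂ → j₂ < ρ i → entry i j₁ ≤ entry i j₂
  col_strict : ∀ i₁ i₂ j, i₁ < i₂ → j < ρ i₂ → entry i₁ j < entry i₂ j

/-- shape associated to a strictly increasing tuple -/
def shp (k : ℕ) (a : Fin k → ℕ) : ℕ → ℕ :=
  fun i => if h : i < k then a ⟨k - 1 - i, by omega⟩ - (k - i) else 0

lemma SSYT.ext' {k ρ} {T₁ T₂ : SSYT k ρ} (h : T₁.entry = T₂.entry) : T₁ = T₂ := by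
  cases T₁; cases T₂; cases h; rfl

lemma sm_gap {k} {a : Fin k → ℕ} (ha : StrictMono a) :
    ∀ d (x y : Fin k), (x : ℕ) + d = (y : ℕ) → a x + d ≤ a y := by
  intro d
  induction d with
  | zero =>
    intro x y h
    have : x = y := Fin.ext (by omega)
    subst this; omega
  | succ n ih =>
    intro x y h
    have hx1 : (x : ℕ) + 1 < k := by omega
    have h1 := ih ⟨(x : ℕ) + 1, hx1⟩ y (by simp; omega)
    have h2 := ha (show x < ⟨(x : ℕ) + 1, hx1⟩ from by simp [Fin.lt_def])
    omega

lemma shp_anti {k} {a : Fin k → ℕ} (ha : StrictMono a)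
    (hb : ∀ i : Fin k, (i : ℕ) + 1 ≤ a i) : Antitone (shp k a) := by
  intro i₁ i₂ h
  unfold shp
  rcases lt_or_ge i₂ k with h2 | h2
  · have h1 : i₁ < k := lt_of_le_of_lt h h2
    rw [dif_pos h1, dif_pos h2]
    have hg := sm_gap ha (i₂ - i₁) ⟨k - 1 - i₂, by omega⟩ ⟨k - 1 - i₁, by omega⟩ (by simp; omega)
    have hb1 := hb ⟨k - 1 - i₂, by omega⟩
    simp at hg hb1
    omega
  · rw [dif_neg (by omega)]
    exact Nat.zero_le _

lemma ssyt_lb {k ρ} (hρ : Antitone ρ) (T : SSYT k ρ) :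
    ∀ i j, j < ρ i → i + 1 ≤ T.entry i j := by
  intro i
  induction i with
  | zero => exact fun j hj => T.one_le 0 j hj
  | succ n ih =>
    intro j hj
    have h1 : j < ρ n := lt_of_lt_of_le hj (hρ (Nat.le_succ n))
    have h2 := ih j h1
    have h3 := T.col_strict n (n + 1) j (Nat.lt_succ_self n) hj
    omega

lemma ssyt_finite (k : ℕ) (ρ : ℕ → ℕ) (R B : ℕ) (hR : ∀ i, R ≤ i → ρ i = 0)
    (hB : ∀ i, ρ i ≤ B) : Finite (SSYT k ρ) := by
  have hentry : ∀ (T : SSYT k ρ) i j, T.entry i j ≤ k := by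
    intro T i j
    rcases lt_or_ge j (ρ i) with h | h
    · exact T.le_k i j h
    · rw [T.zero_outside i j h]; exact Nat.zero_le _
  apply Finite.of_injective (fun (T : SSYT k ρ) =>
    (fun (i : Fin R) (j : Fin B) => (⟨T.entry i j, Nat.lt_succ_of_le (hentry T i j)⟩ : Fin (k + 1))))
  intro T₁ T₂ h
  apply SSYT.ext'
  funext i j
  rcases lt_or_ge j (ρ i) with hj | hj
  · have hiR : i < R := by
      by_contra hc
      rw [hR i (by omega)] at hj; omega
    have hjB : j < B := lt_of_lt_of_le hj (hB i)
    have := congrFun (congrFun h ⟨i, hiR⟩) ⟨j, hjB⟩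
    simpa using congrArg Fin.val this
  · rw [T₁.zero_outside i j hj, T₂.zero_outside i j hj]

lemma finite_shp (k : ℕ) (a : Fin k → ℕ) : Finite (SSYT k (shp k a)) := by
  apply ssyt_finite k _ k (Finset.univ.sup a)
  · intro i hi; simp [shp, Nat.not_lt.mpr hi]
  · intro i
    unfold shp
    split
    · exact le_trans (Nat.sub_le _ _) (Finset.le_sup (Finset.mem_univ _))
    · exact Nat.zero_le _

lemma card_ssyt_zero (ρ : ℕ → ℕ) (hρ : ∀ i, ρ i = 0) : Nat.card (SSYT 0 ρ) = 1 := by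
  rw [Nat.card_eq_one_iff_unique]
  constructor
  · constructor
    intro T₁ T₂
    apply SSYT.ext'
    funext i j
    rw [T₁.zero_outside i j (by rw [hρ i]; omega), T₂.zero_outside i j (by rw [hρ i]; omega)]
  · exact ⟨⟨fun _ _ => 0, fun _ _ _ => rfl, fun i j hj => by simp [hρ i] at hj,
      fun i j hj => by simp [hρ i] at hj, fun i j₁ j₂ _ hj => by simp [hρ i] at hj,
      fun i₁ i₂ j _ hj => by simp [hρ i₂] at hj⟩⟩

lemma sum_range_choose' (n j : ℕ) : ∑ x ∈ Finset.range n, x.choose j = n.choose (j + 1) := by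
  induction n with
  | zero => simp
  | succ n ih =>
    rw [Finset.sum_range_succ, ih, Nat.choose_succ_succ']
    exact Nat.add_comm _ _

lemma sum_Ico_choose_q (c d j : ℕ) (h : c ≤ d) :
    ∑ x ∈ Finset.Ico c d, (x.choose j : ℚ) = (d.choose (j + 1) : ℚ) - (c.choose (j + 1) : ℚ) := by
  rw [Finset.sum_Ico_eq_sub _ h, ← Nat.cast_sum, ← Nat.cast_sum,
    sum_range_choose', sum_range_choose']

lemma det_choose_step (m : ℕ) (a : Fin (m + 1) → ℕ) :
    (Matrix.of fun i j : Fin (m + 1) => ((a i).choose (j : ℕ) : ℚ)).det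
      = (Matrix.of fun i j : Fin m =>
          (((a i.succ).choose ((j : ℕ) + 1) : ℚ) -
            ((a i.castSucc).choose ((j : ℕ) + 1) : ℚ))).det := by
  set N : Matrix (Fin (m + 1)) (Fin (m + 1)) ℚ := Matrix.of
    (fun i : Fin (m + 1) => Fin.cases (motive := fun _ => Fin (m + 1) → ℚ)
      (fun j => ((a 0).choose (j : ℕ) : ℚ))
      (fun i' j => ((a i'.succ).choose (j : ℕ) : ℚ) - ((a i'.castSucc).choose (j : ℕ) : ℚ)) i)
    with hN
  have hdet : (Matrix.of fun i j : Fin (m + 1) => ((a i).choose (j : ℕ) : ℚ)).det = N.det := by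
    apply Matrix.det_eq_of_forall_row_eq_smul_add_pred (c := fun _ => (1 : ℚ))
    · intro j; simp [hN]
    · intro i j
      simp [hN]
      try ring
  have hzero : ∀ i ∈ Finset.univ, i ≠ (0 : Fin (m + 1)) →
      (-1 : ℚ) ^ (i : ℕ) * N i 0 * (N.submatrix i.succAbove Fin.succ).det = 0 := by
    intro i _ hi
    obtain ⟨i', rfl⟩ := Fin.eq_succ_of_ne_zero hi
    have : N i'.succ 0 = 0 := by simp [hN]
    rw [this]
    try ring
  rw [hdet, Matrix.det_succ_column_zero,
    Finset.sum_eq_single_of_mem 0 (Finset.mem_univ _) hzero]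
  have h00 : N 0 0 = 1 := by simp [hN]
  rw [h00]
  try simp only [Fin.val_zero, pow_zero, one_mul, mul_one, Fin.succAbove_zero]
  congr 1

lemma det_sum (m : ℕ) (a : Fin (m + 1) → ℕ) (ha : Monotone a) :
    ∑ b ∈ Fintype.piFinset (fun j : Fin m => Finset.Ico (a j.castSucc) (a j.succ)),
      (Matrix.of fun i j : Fin m => ((b i).choose (j : ℕ) : ℚ)).det
    = (Matrix.of fun i j : Fin (m + 1) => ((a i).choose (j : ℕ) : ℚ)).det := by
  have hml := (Matrix.detRowAlternating (n := Fin m) (R := ℚ)).toMultilinearMap.map_sum_finset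
      (g := fun (_ : Fin m) (x : ℕ) => fun j : Fin m => (x.choose (j : ℕ) : ℚ))
      (A := fun j : Fin m => Finset.Ico (a j.castSucc) (a j.succ))
  have hrow : (fun (i : Fin m) => ∑ x ∈ Finset.Ico (a i.castSucc) (a i.succ),
        (fun j : Fin m => (x.choose (j : ℕ) : ℚ)))
      = (fun (i : Fin m) (j : Fin m) => ((a i.succ).choose ((j : ℕ) + 1) : ℚ) -
          ((a i.castSucc).choose ((j : ℕ) + 1) : ℚ)) := by
    funext i j
    rw [Finset.sum_apply]
    exact sum_Ico_choose_q _ _ _ (ha (Fin.castSucc_le_succ i))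
  rw [hrow] at hml
  rw [det_choose_step]
  exact hml.symm


lemma prod_pairs_eq {k : ℕ} (f : Fin k → Fin k → ℚ) :
    ∏ p ∈ Finset.univ.filter (fun p : Fin k × Fin k => p.1 < p.2), f p.1 p.2
      = ∏ i : Fin k, ∏ j ∈ Finset.Ioi i, f i j := by
  rw [Finset.prod_sigma']
  refine Finset.prod_bij' (fun (p : Fin k × Fin k) _ => (⟨p.1, p.2⟩ : Σ _ : Fin k, Fin k))
    (fun (x : Σ _ : Fin k, Fin k) _ => (x.1, x.2)) ?_ ?_ ?_ ?_ ?_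
  · intro p hp
    simp only [Finset.mem_filter, Finset.mem_univ, true_and] at hp
    simp [hp]
  · intro x hx
    simp only [Finset.mem_sigma, Finset.mem_univ, Finset.mem_Ioi, true_and] at hx
    simp [hx]
  · intro p _; rfl
  · intro x _; rfl
  · intro p _; rfl

lemma prod_pairs_eq' {k : ℕ} (f : Fin k → Fin k → ℚ) :
    ∏ p ∈ Finset.univ.filter (fun p : Fin k × Fin k => p.1 < p.2), f p.1 p.2
      = ∏ j : Fin k, ∏ i ∈ Finset.Iio j, f i j := by
  rw [Finset.prod_sigma']
  refine Finset.prod_bij' (fun (p : Fin k × Fin k) _ => (⟨p.2, p.1⟩ : Σ _ : Fin k, Fin k))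
    (fun (x : Σ _ : Fin k, Fin k) _ => (x.2, x.1)) ?_ ?_ ?_ ?_ ?_
  · intro p hp
    simp only [Finset.mem_filter, Finset.mem_univ, true_and] at hp
    simp [hp]
  · intro x hx
    simp only [Finset.mem_sigma, Finset.mem_univ, Finset.mem_Iio, true_and] at hx
    simp [hx]
  · intro p _; rfl
  · intro x _; rfl
  · intro p _; rfl

lemma prod_sub_fact (n : ℕ) :
    ∏ i ∈ Finset.range n, ((n : ℚ) - (i : ℚ)) = (Nat.factorial n : ℚ) := by
  have h1 : ∀ i ∈ Finset.range n, ((n : ℚ) - (i : ℚ)) = (((n - i : ℕ) : ℚ)) := by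
    intro i hi
    rw [Finset.mem_range] at hi
    push_cast [Nat.cast_sub (Nat.le_of_lt hi)]
    ring
  rw [Finset.prod_congr rfl h1, ← Nat.cast_prod]
  congr 1
  have h2 := Finset.prod_range_reflect (fun i => i + 1) n
  rw [Finset.prod_range_add_one_eq_factorial] at h2
  rw [← h2]
  apply Finset.prod_congr rfl
  intro i hi
  rw [Finset.mem_range] at hi
  omega

lemma prod_Iio_fact {k : ℕ} (j : Fin k) :
    ∏ i ∈ Finset.Iio j, (((j : ℕ) : ℚ) - ((i : ℕ) : ℚ)) = (Nat.factorial (j : ℕ) : ℚ) := by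
  rw [← prod_sub_fact (j : ℕ)]
  refine Finset.prod_bij' (fun (i : Fin k) _ => (i : ℕ))
    (fun (n : ℕ) (hn : n ∈ Finset.range (j : ℕ)) =>
      (⟨n, lt_trans (Finset.mem_range.mp hn) j.isLt⟩ : Fin k)) ?_ ?_ ?_ ?_ ?_
  · intro i hi
    rw [Finset.mem_Iio] at hi
    exact Finset.mem_range.mpr hi
  · intro n hn
    rw [Finset.mem_Iio, Fin.lt_def]
    exact Finset.mem_range.mp hn
  · intro i _; rfl
  · intro n _; rfl
  · intro i _; rfl

lemma det_choose_eq (k : ℕ) (a : Fin k → ℕ) :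
    (Matrix.of fun i j : Fin k => ((a i).choose (j : ℕ) : ℚ)).det
      = (∏ i : Fin k, ∏ j ∈ Finset.Ioi i, ((a j : ℚ) - (a i : ℚ)))
          / ∏ i : Fin k, (Nat.factorial (i : ℕ) : ℚ) := by
  have h1 := Matrix.det_eval_matrixOfPolynomials_eq_det_vandermonde (R := ℚ)
      (fun i => (a i : ℚ)) (fun i => descPochhammer ℚ (i : ℕ))
      (fun i => descPochhammer_natDegree ℚ (i : ℕ)) (fun i => monic_descPochhammer ℚ (i : ℕ))
  have h2 : (Matrix.of (fun i j : Fin k => (descPochhammer ℚ (j : ℕ)).eval ((a i : ℚ))))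
      = Matrix.of (fun i j : Fin k =>
          (Nat.factorial (j : ℕ) : ℚ) *
            (Matrix.of fun i' j' : Fin k => ((a i').choose (j' : ℕ) : ℚ)) i j) := by
    ext i j
    simp only [Matrix.of_apply]
    rw [descPochhammer_eval_eq_descFactorial, Nat.descFactorial_eq_factorial_mul_choose]
    push_cast
    ring
  rw [h2, Matrix.det_mul_row, Matrix.det_vandermonde] at h1
  have hne : (∏ i : Fin k, (Nat.factorial (i : ℕ) : ℚ)) ≠ 0 := by
    apply Finset.prod_ne_zero_iff.mpr
    intro i _
    exact_mod_cast Nat.factorial_ne_zero _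
  rw [eq_div_iff hne, h1]
  ring

lemma wt_eq_det (k : ℕ) (A : Finset ℕ) (hA : A.card = k) :
    wt k A = (Matrix.of fun i j : Fin k =>
      (((A.orderEmbOfFin hA i : ℕ)).choose (j : ℕ) : ℚ)).det := by
  rw [wt, dif_pos hA, det_choose_eq, Finset.prod_div_distrib,
    prod_pairs_eq (fun i j => ((A.orderEmbOfFin hA j : ℕ) : ℚ) - ((A.orderEmbOfFin hA i : ℕ) : ℚ)),
    prod_pairs_eq' (fun i j => (((j : ℕ) : ℚ) - ((i : ℕ) : ℚ)))]
  congr 1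
  exact Finset.prod_congr rfl (fun j _ => prod_Iio_fact j)

/-! ### counting helpers -/

def cntB {k : ℕ} {ρ : ℕ → ℕ} (T : SSYT k ρ) (c i : ℕ) : ℕ :=
  ((Finset.range (ρ i)).filter (fun j => T.entry i j ≤ c)).card

lemma cnt_le {k ρ} (T : SSYT k ρ) (c i : ℕ) : cntB T c i ≤ ρ i := by
  unfold cntB
  exact le_trans (Finset.card_filter_le _ _) (le_of_eq (Finset.card_range _))

lemma cnt_prefix {k ρ} (T : SSYT k ρ) (c i j : ℕ) (hj : j < ρ i) :
    T.entry i j ≤ c ↔ j < cntB T c i := by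
  constructor
  · intro h
    have hsub : Finset.range (j + 1) ⊆
        (Finset.range (ρ i)).filter (fun x => T.entry i x ≤ c) := by
      intro x hx
      rw [Finset.mem_range] at hx
      rw [Finset.mem_filter, Finset.mem_range]
      have hxρ : x < ρ i := by omega
      exact ⟨hxρ, le_trans (T.row_weak i x j (by omega) hj) h⟩
    have := Finset.card_le_card hsub
    rw [Finset.card_range] at this
    unfold cntB
    omega
  · intro h
    by_contra hc
    have hsub : (Finset.range (ρ i)).filter (fun x => T.entry i x ≤ c) ⊆
        Finset.range j := by
      intro x hx
      rw [Finset.mem_filter, Finset.mem_range] at hx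
      rw [Finset.mem_range]
      by_contra hxj
      exact hc (le_trans (T.row_weak i j x (by omega) hx.1) hx.2)
    have := Finset.card_le_card hsub
    rw [Finset.card_range] at this
    unfold cntB at h
    omega

lemma cnt_top {k ρ} (hρ : Antitone ρ) (T : SSYT (k + 1) ρ) (i : ℕ) (hi : k ≤ i) :
    cntB T k i = 0 := by
  unfold cntB
  rw [Finset.card_eq_zero, Finset.eq_empty_iff_forall_notMem]
  intro x hx
  rw [Finset.mem_filter, Finset.mem_range] at hx
  have := ssyt_lb hρ T i x hx.1
  omega

lemma cnt_ge {k ρ} (hρ : Antitone ρ) (T : SSYT (k + 1) ρ) (i : ℕ) :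
    ρ (i + 1) ≤ cntB T k i := by
  have hsub : Finset.range (ρ (i + 1)) ⊆
      (Finset.range (ρ i)).filter (fun x => T.entry i x ≤ k) := by
    intro x hx
    rw [Finset.mem_range] at hx
    rw [Finset.mem_filter, Finset.mem_range]
    have hxρ : x < ρ i := lt_of_lt_of_le hx (hρ (Nat.le_succ i))
    have h1 := T.col_strict i (i + 1) x (Nat.lt_succ_self i) hx
    have h2 := T.le_k (i + 1) x hx
    exact ⟨hxρ, by omega⟩
  have := Finset.card_le_card hsub
  rw [Finset.card_range] at this
  unfold cntB
  omega

/-! ### restriction and extension -/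

def restrEntry {k : ℕ} {ρ : ℕ → ℕ} (T : SSYT (k + 1) ρ) : ℕ → ℕ → ℕ :=
  fun i j => if j < cntB T k i then T.entry i j else 0

def restrictSSYT {k : ℕ} {ρ : ℕ → ℕ} (hρ : Antitone ρ) (T : SSYT (k + 1) ρ)
    (ρ' : ℕ → ℕ) (hρ' : ∀ i, ρ' i = cntB T k i) : SSYT k ρ' where
  entry := restrEntry T
  zero_outside i j h := by
    rw [hρ' i] at h
    exact if_neg (by omega)
  one_le i j h := by
    rw [hρ' i] at h
    rw [restrEntry, if_pos h]
    exact T.one_le i j (lt_of_lt_of_le h (cnt_le T k i))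
  le_k i j h := by
    rw [hρ' i] at h
    rw [restrEntry, if_pos h]
    exact (cnt_prefix T k i j (lt_of_lt_of_le h (cnt_le T k i))).mpr h
  row_weak i j₁ j₂ h12 h2 := by
    rw [hρ' i] at h2
    simp only [restrEntry]
    rw [if_pos h2, if_pos (lt_of_le_of_lt h12 h2)]
    exact T.row_weak i j₁ j₂ h12 (lt_of_lt_of_le h2 (cnt_le T k i))
  col_strict i₁ i₂ j h12 hj := by
    rw [hρ' i₂] at hj
    have hj2 : j < ρ i₂ := lt_of_lt_of_le hj (cnt_le T k i₂)
    have hj1ρ : j < ρ i₁ := lt_of_lt_of_le hj2 (hρ (le_of_lt h12))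
    have hele : T.entry i₂ j ≤ k := (cnt_prefix T k i₂ j hj2).mpr hj
    have hlt := T.col_strict i₁ i₂ j h12 hj2
    have hj1 : j < cntB T k i₁ := (cnt_prefix T k i₁ j hj1ρ).mp (by omega)
    simp only [restrEntry]
    rw [if_pos hj1, if_pos hj]
    exact hlt

def extEntry (k : ℕ) (ρ ρ' : ℕ → ℕ) (T' : SSYT k ρ') : ℕ → ℕ → ℕ :=
  fun i j => if j < ρ i then (if j < ρ' i then T'.entry i j else k + 1) else 0

def extendSSYT {k : ℕ} {ρ ρ' : ℕ → ℕ} (hρ : Antitone ρ) (hρ' : Antitone ρ')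
    (h1 : ∀ i, ρ' i ≤ ρ i) (h2 : ∀ i, ρ (i + 1) ≤ ρ' i) (T' : SSYT k ρ') :
    SSYT (k + 1) ρ where
  entry := extEntry k ρ ρ' T'
  zero_outside i j h := if_neg (by omega)
  one_le i j h := by
    rw [extEntry, if_pos h]
    split
    · exact T'.one_le i j ‹_›
    · omega
  le_k i j h := by
    rw [extEntry, if_pos h]
    split
    · exact le_trans (T'.le_k i j ‹_›) (by omega)
    · exact le_refl _
  row_weak i j₁ j₂ h12 h2 := by
    simp only [extEntry]
    rw [if_pos h2, if_pos (lt_of_le_of_lt h12 h2)]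
    rcases lt_or_ge j₂ (ρ' i) with hc | hc
    · rw [if_pos hc, if_pos (lt_of_le_of_lt h12 hc)]
      exact T'.row_weak i j₁ j₂ h12 hc
    · rw [if_neg (show ¬ j₂ < ρ' i by omega)]
      rcases lt_or_ge j₁ (ρ' i) with he | he
      · rw [if_pos he]
        exact le_trans (T'.le_k i j₁ he) (by omega)
      · rw [if_neg (show ¬ j₁ < ρ' i by omega)]
        try omega
  col_strict i₁ i₂ j h12 hj := by
    have hj1 : j < ρ i₁ := lt_of_lt_of_le hj (hρ (le_of_lt h12))
    simp only [extEntry]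
    rw [if_pos hj, if_pos hj1]
    rcases lt_or_ge j (ρ' i₂) with hc | hc
    · have hc1 : j < ρ' i₁ := lt_of_lt_of_le hc (hρ' (le_of_lt h12))
      rw [if_pos hc, if_pos hc1]
      exact T'.col_strict i₁ i₂ j h12 hc
    · rw [if_neg (show ¬ j < ρ' i₂ by omega)]
      have hin : j < ρ' i₁ :=
        lt_of_lt_of_le (lt_of_lt_of_le hj (hρ (by omega : i₁ + 1 ≤ i₂))) (h2 i₁)
      rw [if_pos hin]
      exact lt_of_le_of_lt (T'.le_k i₁ j hin) (by omega)

lemma cnt_extend {k : ℕ} {ρ ρ' : ℕ → ℕ} (hρ : Antitone ρ) (hρ' : Antitone ρ')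
    (h1 : ∀ i, ρ' i ≤ ρ i) (h2 : ∀ i, ρ (i + 1) ≤ ρ' i) (T' : SSYT k ρ') (i : ℕ) :
    cntB (extendSSYT hρ hρ' h1 h2 T') k i = ρ' i := by
  unfold cntB
  have hflt : (Finset.range (ρ i)).filter
      (fun j => (extendSSYT hρ hρ' h1 h2 T').entry i j ≤ k) = Finset.range (ρ' i) := by
    ext x
    simp only [Finset.mem_filter, Finset.mem_range]
    constructor
    · rintro ⟨hx, hle⟩
      by_contra hge
      rw [show (extendSSYT hρ hρ' h1 h2 T').entry = extEntry k ρ ρ' T' from rfl,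
        extEntry, if_pos hx, if_neg hge] at hle
      omega
    · intro hx
      refine ⟨lt_of_lt_of_le hx (h1 i), ?_⟩
      rw [show (extendSSYT hρ hρ' h1 h2 T').entry = extEntry k ρ ρ' T' from rfl,
        extEntry, if_pos (lt_of_lt_of_le hx (h1 i)), if_pos hx]
      exact T'.le_k i x hx
  rw [hflt, Finset.card_range]

lemma shp_eval {k : ℕ} (a : Fin k → ℕ) (i : ℕ) (hi : i < k) (x : Fin k)
    (hx : (x : ℕ) = k - 1 - i) : shp k a i = a x - (k - i) := by
  unfold shp
  rw [dif_pos hi]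
  have hxx : (⟨k - 1 - i, by omega⟩ : Fin k) = x := Fin.ext (by simp; omega)
  rw [hxx]

lemma shp_zero {k : ℕ} (a : Fin k → ℕ) (i : ℕ) (hi : k ≤ i) : shp k a i = 0 := by
  unfold shp
  rw [dif_neg (by omega)]

def bmT {m : ℕ} {ρ : ℕ → ℕ} (T : SSYT (m + 1) ρ) : Fin m → ℕ :=
  fun j => cntB T m (m - 1 - (j : ℕ)) + ((j : ℕ) + 1)

lemma extendSSYT_entry {k : ℕ} {ρ ρ' : ℕ → ℕ} (hρ : Antitone ρ) (hρ' : Antitone ρ')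
    (h1 : ∀ i, ρ' i ≤ ρ i) (h2 : ∀ i, ρ (i + 1) ≤ ρ' i) (T' : SSYT k ρ') :
    (extendSSYT hρ hρ' h1 h2 T').entry = extEntry k ρ ρ' T' := rfl

lemma restrictSSYT_entry {k : ℕ} {ρ : ℕ → ℕ} (hρ : Antitone ρ) (T : SSYT (k + 1) ρ)
    (ρ' : ℕ → ℕ) (hρ' : ∀ i, ρ' i = cntB T k i) :
    (restrictSSYT hρ T ρ' hρ').entry = restrEntry T := rfl

lemma sigma_ssyt_ext {m : ℕ} {s : Finset (Fin m → ℕ)}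
    (x y : Σ b : {z // z ∈ s}, SSYT m (shp m (b : Fin m → ℕ)))
    (h1 : (x.1 : Fin m → ℕ) = (y.1 : Fin m → ℕ)) (h2 : x.2.entry = y.2.entry) : x = y := by
  obtain ⟨⟨b₁, m₁⟩, T₁⟩ := x
  obtain ⟨⟨b₂, m₂⟩, T₂⟩ := y
  simp only at h1 h2
  subst h1
  exact congrArg _ (SSYT.ext' h2)


def fN (k : ℕ) (a : Fin k → ℕ) : ℕ → ℕ := fun n => if h : n < k then a ⟨n, h⟩ else 0

lemma fN_lt {k : ℕ} {a : Fin k → ℕ} {n : ℕ} (h : n < k) : fN k a n = a ⟨n, h⟩ := dif_pos h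

lemma fN_fin {k : ℕ} {a : Fin k → ℕ} (x : Fin k) : fN k a (x : ℕ) = a x := by
  rw [fN_lt x.isLt]

lemma shp_eval2 {k : ℕ} {a : Fin k → ℕ} {i : ℕ} (hi : i < k) :
    shp k a i = fN k a (k - 1 - i) - (k - i) := by
  unfold shp fN
  rw [dif_pos hi, dif_pos (show k - 1 - i < k by omega)]

lemma fN_gap {k : ℕ} {a : Fin k → ℕ} (ha : StrictMono a) {n n' : ℕ} (h : n ≤ n')
    (h' : n' < k) : fN k a n + (n' - n) ≤ fN k a n' := by
  rw [fN_lt (lt_of_le_of_lt h h'), fN_lt h']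
  have hg := sm_gap ha (n' - n) ⟨n, lt_of_le_of_lt h h'⟩ ⟨n', h'⟩ (by simp; omega)
  simpa using hg

section StepLemmas

variable {m : ℕ} {a : Fin (m + 1) → ℕ} {b : Fin m → ℕ}

lemma hb_fN {k : ℕ} {a : Fin k → ℕ} (hb : ∀ i : Fin k, (i : ℕ) + 1 ≤ a i) :
    ∀ n, n < k → n + 1 ≤ fN k a n := by
  intro n hn
  rw [fN_lt hn]
  have := hb ⟨n, hn⟩
  simpa using this

lemma hIco_fN (hIco : ∀ j : Fin m, a j.castSucc ≤ b j ∧ b j < a j.succ) :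
    ∀ n, n < m → fN (m + 1) a n ≤ fN m b n ∧ fN m b n < fN (m + 1) a (n + 1) := by
  intro n hn
  have h := hIco ⟨n, hn⟩
  have e1 : a (⟨n, hn⟩ : Fin m).castSucc = fN (m + 1) a n := by
    rw [fN_lt (show n < m + 1 by omega)]
    exact congrArg a (Fin.ext (by simp))
  have e2 : a (⟨n, hn⟩ : Fin m).succ = fN (m + 1) a (n + 1) := by
    rw [fN_lt (show n + 1 < m + 1 by omega)]
    exact congrArg a (Fin.ext (by simp))
  have e3 : b (⟨n, hn⟩ : Fin m) = fN m b n := (fN_lt hn).symm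
  rw [e1, e2, e3] at h
  exact h

lemma bval_one_le (hb : ∀ i : Fin (m + 1), (i : ℕ) + 1 ≤ a i)
    (hIco : ∀ j : Fin m, a j.castSucc ≤ b j ∧ b j < a j.succ) :
    ∀ j : Fin m, (j : ℕ) + 1 ≤ b j := by
  intro j
  have h := (hIco_fN hIco) (j : ℕ) j.isLt
  have h2 := hb_fN hb (j : ℕ) (by omega)
  rw [fN_fin] at h
  omega

lemma bval_sm (ha : StrictMono a)
    (hIco : ∀ j : Fin m, a j.castSucc ≤ b j ∧ b j < a j.succ) : StrictMono b := by
  intro x y hxy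
  rw [Fin.lt_def] at hxy
  have h1 := (hIco_fN hIco) (x : ℕ) x.isLt
  have h2 := (hIco_fN hIco) (y : ℕ) y.isLt
  rw [fN_fin] at h1 h2
  have h3 : fN (m + 1) a ((x : ℕ) + 1) + ((y : ℕ) - ((x : ℕ) + 1))
      ≤ fN (m + 1) a (y : ℕ) := fN_gap ha (by omega) (by omega)
  omega

lemma shp_b_le (hb : ∀ i : Fin (m + 1), (i : ℕ) + 1 ≤ a i)
    (hIco : ∀ j : Fin m, a j.castSucc ≤ b j ∧ b j < a j.succ) :
    ∀ i, shp m b i ≤ shp (m + 1) a i := by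
  intro i
  rcases lt_or_ge i m with him | him
  · rw [shp_eval2 him, shp_eval2 (show i < m + 1 by omega)]
    have h := (hIco_fN hIco) (m - 1 - i) (by omega)
    have h2 := hb_fN hb (m - 1 - i + 1) (by omega)
    have hidx : m - 1 - i + 1 = m + 1 - 1 - i := by omega
    rw [hidx] at h h2
    omega
  · rw [shp_zero b i him]
    exact Nat.zero_le _

lemma shp_b_ge (hIco : ∀ j : Fin m, a j.castSucc ≤ b j ∧ b j < a j.succ) :
    ∀ i, shp (m + 1) a (i + 1) ≤ shp m b i := by
  intro i
  rcases lt_or_ge i m with him | him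
  · rw [shp_eval2 him, shp_eval2 (show i + 1 < m + 1 by omega)]
    have h := (hIco_fN hIco) (m - 1 - i) (by omega)
    have hidx : m + 1 - 1 - (i + 1) = m - 1 - i := by omega
    rw [hidx]
    omega
  · rw [shp_zero a (i + 1) (by omega)]
    exact Nat.zero_le _

lemma shp_bmT (ha : StrictMono a) (hb : ∀ i : Fin (m + 1), (i : ℕ) + 1 ≤ a i)
    (T : SSYT (m + 1) (shp (m + 1) a)) :
    ∀ i, shp m (bmT T) i = cntB T m i := by
  intro i
  rcases lt_or_ge i m with him | him
  · rw [shp_eval2 him, fN_lt (show m - 1 - i < m by omega)]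
    show bmT T ⟨m - 1 - i, _⟩ - (m - i) = cntB T m i
    show cntB T m (m - 1 - (m - 1 - i)) + ((m - 1 - i) + 1) - (m - i) = cntB T m i
    have hii : m - 1 - (m - 1 - i) = i := by omega
    rw [hii]
    omega
  · rw [shp_zero (bmT T) i him, cnt_top (shp_anti ha hb) T i him]

lemma bmT_Ico (ha : StrictMono a) (hb : ∀ i : Fin (m + 1), (i : ℕ) + 1 ≤ a i)
    (T : SSYT (m + 1) (shp (m + 1) a)) :
    ∀ j : Fin m, a j.castSucc ≤ bmT T j ∧ bmT T j < a j.succ := by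
  intro j
  have hjlt := j.isLt
  have hcle := cnt_le T m (m - 1 - (j : ℕ))
  have e2 : shp (m + 1) a (m - 1 - (j : ℕ))
      = fN (m + 1) a ((j : ℕ) + 1) - ((j : ℕ) + 2) := by
    rw [shp_eval2 (show m - 1 - (j : ℕ) < m + 1 by omega)]
    have h1 : m + 1 - 1 - (m - 1 - (j : ℕ)) = (j : ℕ) + 1 := by omega
    have h2 : m + 1 - (m - 1 - (j : ℕ)) = (j : ℕ) + 2 := by omega
    rw [h1, h2]
  have hge := cnt_ge (shp_anti ha hb) T (m - 1 - (j : ℕ))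
  have e3 : shp (m + 1) a ((m - 1 - (j : ℕ)) + 1) = fN (m + 1) a (j : ℕ) - ((j : ℕ) + 1) := by
    rw [shp_eval2 (show (m - 1 - (j : ℕ)) + 1 < m + 1 by omega)]
    have h1 : m + 1 - 1 - (m - 1 - (j : ℕ) + 1) = (j : ℕ) := by omega
    have h2 : m + 1 - (m - 1 - (j : ℕ) + 1) = (j : ℕ) + 1 := by omega
    rw [h1, h2]
  rw [e2] at hcle
  rw [e3] at hge
  have h4 := hb_fN hb ((j : ℕ) + 1) (by omega)
  have h5 := hb_fN hb (j : ℕ) (by omega)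
  have ecs : a j.castSucc = fN (m + 1) a (j : ℕ) := by
    rw [fN_lt (show (j : ℕ) < m + 1 by omega)]
    exact congrArg a (Fin.ext (by simp))
  have esc : a j.succ = fN (m + 1) a ((j : ℕ) + 1) := by
    rw [fN_lt (show (j : ℕ) + 1 < m + 1 by omega)]
    exact congrArg a (Fin.ext (by simp))
  rw [ecs, esc]
  show fN (m + 1) a (j : ℕ) ≤ cntB T m (m - 1 - (j : ℕ)) + ((j : ℕ) + 1)
    ∧ cntB T m (m - 1 - (j : ℕ)) + ((j : ℕ) + 1) < fN (m + 1) a ((j : ℕ) + 1)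
  omega

end StepLemmas

lemma card_step (m : ℕ) (a : Fin (m + 1) → ℕ) (ha : StrictMono a)
    (hb : ∀ i : Fin (m + 1), (i : ℕ) + 1 ≤ a i) :
    Nat.card (SSYT (m + 1) (shp (m + 1) a))
      = ∑ b ∈ Fintype.piFinset (fun j : Fin m => Finset.Ico (a j.castSucc) (a j.succ)),
          Nat.card (SSYT m (shp m b)) := by
  classical
  have hρa : Antitone (shp (m + 1) a) := shp_anti ha hb
  set s : Finset (Fin m → ℕ) :=
    Fintype.piFinset (fun j : Fin m => Finset.Ico (a j.castSucc) (a j.succ)) with hsdef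
  have hmem_iff : ∀ b : Fin m → ℕ, b ∈ s ↔
      ∀ j : Fin m, a j.castSucc ≤ b j ∧ b j < a j.succ := by
    intro b
    simp [hsdef, Fintype.mem_piFinset, Finset.mem_Ico]
  have E : SSYT (m + 1) (shp (m + 1) a) ≃
      Σ b : {z // z ∈ s}, SSYT m (shp m (b : Fin m → ℕ)) := by
    refine
      { toFun := fun T => ⟨⟨bmT T, (hmem_iff _).mpr (bmT_Ico ha hb T)⟩,
          restrictSSYT hρa T (shp m (bmT T)) (shp_bmT ha hb T)⟩
        invFun := fun p =>
          extendSSYT hρa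
            (shp_anti (bval_sm ha ((hmem_iff _).mp p.1.2)) (bval_one_le hb ((hmem_iff _).mp p.1.2)))
            (shp_b_le hb ((hmem_iff _).mp p.1.2)) (shp_b_ge ((hmem_iff _).mp p.1.2)) p.2
        left_inv := ?_
        right_inv := ?_ }
    · intro T
      apply SSYT.ext'
      funext i j
      simp only [extendSSYT_entry, restrictSSYT_entry, extEntry]
      rw [shp_bmT ha hb T i]
      rcases lt_or_ge j (shp (m + 1) a i) with hρij | hρij
      · rw [if_pos hρij]
        rcases lt_or_ge j (cntB T m i) with hcj | hcj
        · rw [if_pos hcj]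
          simp only [restrEntry]
          rw [if_pos hcj]
        · rw [if_neg (show ¬ j < cntB T m i by omega)]
          have hk1 := T.le_k i j hρij
          have hk2 : ¬ T.entry i j ≤ m := fun hcon =>
            absurd ((cnt_prefix T m i j hρij).mp hcon) (by omega)
          omega
      · rw [if_neg (show ¬ j < shp (m + 1) a i by omega), T.zero_outside i j (by omega)]
    · rintro ⟨⟨b, hbmem⟩, T'⟩
      have hIco := (hmem_iff b).mp hbmem
      apply sigma_ssyt_ext
      · show bmT _ = b
        funext j
        have hjlt := j.isLt
        have hcntX := cnt_extend hρa
          (shp_anti (bval_sm ha hIco) (bval_one_le hb hIco))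
          (shp_b_le hb hIco) (shp_b_ge hIco) T'
        have e1 : shp m b (m - 1 - (j : ℕ)) = b j - ((j : ℕ) + 1) := by
          rw [shp_eval2 (show m - 1 - (j : ℕ) < m by omega)]
          have h1 : m - 1 - (m - 1 - (j : ℕ)) = (j : ℕ) := by omega
          have h2 : m - (m - 1 - (j : ℕ)) = (j : ℕ) + 1 := by omega
          rw [h1, h2, fN_fin]
        have e4 := bval_one_le hb hIco j
        show cntB _ m (m - 1 - (j : ℕ)) + ((j : ℕ) + 1) = b j
        rw [hcntX, e1]
        omega
      · show restrEntry _ = T'.entry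
        funext i j
        have hcntX := cnt_extend hρa
          (shp_anti (bval_sm ha hIco) (bval_one_le hb hIco))
          (shp_b_le hb hIco) (shp_b_ge hIco) T'
        simp only [restrEntry]
        rw [hcntX i]
        rcases lt_or_ge j (shp m b i) with hc | hc
        · rw [if_pos hc]
          simp only [extendSSYT_entry, extEntry]
          rw [if_pos (lt_of_lt_of_le hc (shp_b_le hb hIco i)), if_pos hc]
        · rw [if_neg (show ¬ j < shp m b i by omega)]
          exact (T'.zero_outside i j hc).symm
  rw [Nat.card_congr E]
  haveI hfin : ∀ b : {z // z ∈ s}, Finite (SSYT m (shp m (b : Fin m → ℕ))) :=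
    fun b => finite_shp m b
  letI : ∀ b : {z // z ∈ s}, Fintype (SSYT m (shp m (b : Fin m → ℕ))) :=
    fun b => Fintype.ofFinite _
  rw [Nat.card_eq_fintype_card, Fintype.card_sigma]
  rw [← Finset.sum_coe_sort s (fun b => Nat.card (SSYT m (shp m b)))]
  exact Finset.sum_congr rfl (fun b _ => (Nat.card_eq_fintype_card).symm)

lemma card_ssyt_eq_det : ∀ (k : ℕ) (a : Fin k → ℕ), StrictMono a →
    (∀ i : Fin k, (i : ℕ) + 1 ≤ a i) →
    (Nat.card (SSYT k (shp k a)) : ℚ)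
      = (Matrix.of fun i j : Fin k => ((a i).choose (j : ℕ) : ℚ)).det := by
  intro k
  induction k with
  | zero =>
    intro a _ _
    rw [card_ssyt_zero _ (fun i => shp_zero a i (Nat.zero_le i))]
    rw [Matrix.det_fin_zero]
    norm_num
  | succ m ih =>
    intro a ha hb
    rw [card_step m a ha hb, ← det_sum m a ha.monotone, Nat.cast_sum]
    apply Finset.sum_congr rfl
    intro b hbmem
    have hIco : ∀ j : Fin m, a j.castSucc ≤ b j ∧ b j < a j.succ := by
      intro j
      have := (Fintype.mem_piFinset.mp hbmem) j
      rw [Finset.mem_Ico] at this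
      exact this
    exact ih b (bval_sm ha hIco) (bval_one_le hb hIco)

/-- For a `k`-element set `A = {a₁ < ... < a_k}` of positive integers,
`∏_{i<j} (a_j - a_i)/(j - i)` equals the number of semistandard Young tableaux
of shape `λ = (a_k - k, a_{k-1} - (k-1), ..., a_1 - 1)` with entries at most
`k`. -/
theorem wt_eq_card_ssyt (k : ℕ) (hk : 0 < k) (A : Finset ℕ) (hA : A.card = k)
    (hpos : ∀ x ∈ A, 1 ≤ x) :
    wt k A =
      Nat.card (SSYT k (fun i =>
        if h : i < k then
          A.orderEmbOfFin hA ⟨k - 1 - i, by omega⟩ - (k - i)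
        else 0)) := by
  have ha : StrictMono (fun i : Fin k => (A.orderEmbOfFin hA i : ℕ)) :=
    (A.orderEmbOfFin hA).strictMono
  have h0 : 1 ≤ (A.orderEmbOfFin hA ⟨0, hk⟩ : ℕ) :=
    hpos _ (A.orderEmbOfFin_mem hA ⟨0, hk⟩)
  have hb : ∀ i : Fin k, (i : ℕ) + 1 ≤ (A.orderEmbOfFin hA i : ℕ) := by
    intro i
    have hg := sm_gap ha (i : ℕ) ⟨0, hk⟩ i (by simp)
    omega
  have hshape : (fun i =>
      if h : i < k then A.orderEmbOfFin hA ⟨k - 1 - i, by omega⟩ - (k - i) else 0)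
      = shp k (fun i : Fin k => (A.orderEmbOfFin hA i : ℕ)) := rfl
  rw [hshape, wt_eq_det k A hA]
  exact (card_ssyt_eq_det k _ ha hb).symm
end

section
/- In any domino tiling of the Aztec diamond of order n, each square along the spine either shares its domino with the square to its left or above (compatible only with a zag), or shares its domino with the square to its right or below (compatible only with a zig); hence each tiling is compatible with exactly one full assignment of zigs and zags to all spine squares. -/
/-- The Aztec diamond of order `n`: the set of unit squares, indexed by their
lower-left corners `(i, j) ∈ ℤ²` (so the square has center `(i+1/2, j+1/2)`),
satisfying `|i + 1/2| + |j + 1/2| ≤ n`. -/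
def aztec (n : ℕ) : Set (ℤ × ℤ) :=
  {p | |2 * p.1 + 1| + |2 * p.2 + 1| ≤ 2 * n}

/-- A domino tiling of the Aztec diamond of order `n`, encoded as the
involution sending each square to the other square of its domino. -/
structure Tiling (n : ℕ) where
  t : ℤ × ℤ → ℤ × ℤ
  mem_aztec : ∀ p ∈ aztec n, t p ∈ aztec n
  adj : ∀ p ∈ aztec n, |(t p).1 - p.1| + |(t p).2 - p.2| = 1
  invol : ∀ p ∈ aztec n, t (t p) = p
  eq_of_not_mem : ∀ p ∉ aztec n, t p = p

/-! The domino partner of a square is one of its four neighbours, and these split into the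
left/upper pair and the right/lower pair; which pair contains the partner decides, at each spine
square, the only barrier (zag or zig) that the domino does not cross. -/

theorem existsUnique_bool_of_forall_xor {ι : Type*} {P Q : ι → Prop} (h : ∀ i, Xor (P i) (Q i)) :
    ∃! z : ι → Bool, ∀ i, if z i then ¬Q i else ¬P i := by
  classical
  refine ⟨fun i => decide (P i), fun i => ?_, fun z hz => funext fun i => ?_⟩
  · rcases h i with ⟨hP, hQ⟩ | ⟨hQ, hP⟩ <;> simp [hP, hQ]
  · have hzi := hz i
    rcases h i with ⟨hP, hQ⟩ | ⟨hQ, hP⟩ <;> split_ifs at hzi with hb <;> simp_all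

theorem mem_aztec_diag {n : ℕ} {i : ℤ} : (i, i) ∈ aztec n ↔ |2 * i + 1| ≤ n := by
  simp only [aztec, Set.mem_ofPred_eq]
  omega

theorem Tiling.xor_partner {n : ℕ} (T : Tiling n) {a b : ℤ} (hab : (a, b) ∈ aztec n) :
    Xor (T.t (a, b) = (a - 1, b) ∨ T.t (a, b) = (a, b + 1))
        (T.t (a, b) = (a + 1, b) ∨ T.t (a, b) = (a, b - 1)) := by
  have hadj := T.adj (a, b) hab
  obtain ⟨c, d, hcd⟩ : ∃ c d : ℤ, T.t (a, b) = (c, d) := ⟨_, _, rfl⟩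
  rw [hcd] at hadj ⊢
  have := abs_choice (c - a)
  have := abs_choice (d - b)
  have := abs_nonneg (c - a)
  have := abs_nonneg (d - b)
  simp only [Xor, Prod.mk.injEq] at hadj ⊢
  omega

theorem spine_mem_aztec {n m : ℕ} (hm : m < 2 * ((n + 1) / 2)) :
    ((m : ℤ) - ((n + 1) / 2 : ℕ), (m : ℤ) - ((n + 1) / 2 : ℕ)) ∈ aztec n := by
  rw [mem_aztec_diag, abs_le]
  omega

theorem unique_barrier_assignment_general (n : ℕ) (T : Tiling n) :
    (∀ m : Fin (2 * ((n + 1) / 2)),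
      (fun i : ℤ =>
        Xor' (T.t (i, i) = (i - 1, i) ∨ T.t (i, i) = (i, i + 1))
             (T.t (i, i) = (i + 1, i) ∨ T.t (i, i) = (i, i - 1)))
      ((m : ℤ) - ((n + 1) / 2 : ℕ)))
    ∧ ∃! z : Fin (2 * ((n + 1) / 2)) → Bool,
        ∀ m : Fin (2 * ((n + 1) / 2)),
          (fun i : ℤ =>
            if z m then
              T.t (i, i) ≠ (i, i - 1) ∧ T.t (i, i) ≠ (i + 1, i)
            else
              T.t (i, i) ≠ (i - 1, i) ∧ T.t (i, i) ≠ (i, i + 1))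
          ((m : ℤ) - ((n + 1) / 2 : ℕ)) := by
  have hxor : ∀ m : Fin (2 * ((n + 1) / 2)), _ := fun m => T.xor_partner (spine_mem_aztec m.isLt)
  refine ⟨hxor, ?_⟩
  simp only [ne_eq, ← not_or]
  exact existsUnique_bool_of_forall_xor fun m => by simpa only [or_comm] using hxor m

/-- Let `k = ⌈n/2⌉`; the spine consists of the `2k` squares `(i, i)` with
`i = m - k` for `m = 0, ..., 2k - 1`.  In any domino tiling, each spine square
either shares its domino with the square to its left or the square above, or
shares it with the square to its right or the square below — exactly one of
the two; hence there is exactly one assignment of zigs and zags to all spine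
squares compatible with the tiling (`true` = zig = barriers on the bottom and
right edges, `false` = zag = barriers on the left and top edges). -/
theorem unique_barrier_assignment (n : ℕ) (hn : 0 < n) (T : Tiling n) :
    (∀ m : Fin (2 * ((n + 1) / 2)),
      (fun i : ℤ =>
        Xor' (T.t (i, i) = (i - 1, i) ∨ T.t (i, i) = (i, i + 1))
             (T.t (i, i) = (i + 1, i) ∨ T.t (i, i) = (i, i - 1)))
      ((m : ℤ) - ((n + 1) / 2 : ℕ)))
    ∧ ∃! z : Fin (2 * ((n + 1) / 2)) → Bool,
        ∀ m : Fin (2 * ((n + 1) / 2)),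
          (fun i : ℤ =>
            if z m then
              T.t (i, i) ≠ (i, i - 1) ∧ T.t (i, i) ≠ (i + 1, i)
            else
              T.t (i, i) ≠ (i - 1, i) ∧ T.t (i, i) ≠ (i, i + 1))
          ((m : ℤ) - ((n + 1) / 2 : ℕ)) :=
  unique_barrier_assignment_general n T
end

section
/- In any domino tiling of the Aztec diamond of order n, the induced sequence of zigs and zags along the 2k spine squares (k = ⌈n/2⌉) contains exactly k zigs and exactly k zags. -/
/-!
Colour the square `(i, j)` by the parity of `i + j`, and let `k = ⌈n/2⌉`. Strictly below the
spine diagonal the diamond has exactly `k` more odd squares than even ones: the whole diamond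
is balanced (reflect `i ↦ -1 - i`), it is symmetric about the diagonal, and its `2k` diagonal
squares, the spine, are all even. Every domino covers one odd and one even square, so the
dominoes lying below the diagonal are balanced, and the excess `k` is carried by the dominoes
leaving that region. Such a domino covers an odd square just below the diagonal and a spine
square, at which it is a zig. Hence there are `k` zigs, and the other `k` spine squares are zags.
-/

open Finset

namespace Finset

theorem card_filter_eq_card_filter_not_of_involution {α : Type*} {s : Finset α}
    {P : α → Prop} [DecidablePred P] (f : α → α) (hf : ∀ a ∈ s, f a ∈ s)
    (hff : ∀ a ∈ s, f (f a) = a) (hP : ∀ a ∈ s, P (f a) ↔ ¬ P a) :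
    #{a ∈ s | P a} = #{a ∈ s | ¬ P a} := by
  apply card_nbij' f f <;> intro a ha <;> simp only [coe_filter, Set.mem_ofPred] at ha ⊢
  · exact ⟨hf a ha.1, fun hPfa => (hP a ha.1).1 hPfa ha.2⟩
  · exact ⟨hf a ha.1, (hP a ha.1).2 ha.2⟩
  · exact hff a ha.1
  · exact hff a ha.1

theorem card_eq_two_mul_card_filter_lt_add_card_filter_eq {α : Type*} [LinearOrder α]
    {s : Finset (α × α)} (hs : ∀ p ∈ s, p.swap ∈ s) :
    #s = 2 * #{p ∈ s | p.2 < p.1} + #{p ∈ s | p.1 = p.2} := by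
  have hswap : #{p ∈ s | p.2 < p.1} = #{p ∈ s | p.1 < p.2} := by
    apply card_nbij' Prod.swap Prod.swap <;> intro p hp <;>
      simp only [coe_filter, Set.mem_ofPred] at hp ⊢
    · exact ⟨hs p hp.1, hp.2⟩
    · exact ⟨hs p hp.1, hp.2⟩
    · exact p.swap_swap
    · exact p.swap_swap
  have htrichotomy :
      #s = #{p ∈ s | p.2 < p.1} + #{p ∈ s | p.1 < p.2} + #{p ∈ s | p.1 = p.2} := by
    rw [← card_filter_add_card_filter_not (fun p : α × α => p.2 < p.1),
      ← card_filter_add_card_filter_not (s := {p ∈ s | ¬ p.2 < p.1})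
        (fun p : α × α => p.1 < p.2),
      add_assoc, filter_filter, filter_filter]
    congr 3 <;> ext p <;> simp only [mem_filter] <;> grind
  omega

theorem card_filter_eq_card_filter_not_add_card_filter_not_mem {α : Type*} [DecidableEq α]
    {s : Finset α}
    {P : α → Prop} [DecidablePred P] (f : α → α) (hff : ∀ a ∈ s, f (f a) = a)
    (hP : ∀ a ∈ s, P (f a) ↔ ¬ P a) (hleave : ∀ a ∈ s, f a ∉ s → P a) :
    #{a ∈ s | P a} = #{a ∈ s | ¬ P a} + #{a ∈ s | f a ∉ s} := by
  have hsplit (R : α → Prop) [DecidablePred R] : #{a ∈ s | R a}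
      = #{a ∈ {a ∈ s | f a ∈ s} | R a} + #{a ∈ {a ∈ s | f a ∉ s} | R a} := by
    rw [filter_comm, filter_comm (fun a => f a ∉ s)]
    exact (card_filter_add_card_filter_not _).symm
  have hpaired : #{a ∈ {a ∈ s | f a ∈ s} | P a} = #{a ∈ {a ∈ s | f a ∈ s} | ¬ P a} := by
    refine card_filter_eq_card_filter_not_of_involution f (fun a ha => ?_) (fun a ha => ?_)
      (fun a ha => ?_) <;> obtain ⟨ha, hfa⟩ := mem_filter.1 ha
    · exact mem_filter.2 ⟨hfa, by rwa [hff a ha]⟩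
    · exact hff a ha
    · exact hP a ha
  have hP_leave := hsplit P
  have hnotP_leave := hsplit fun a => ¬ P a
  rw [filter_true_of_mem fun a ha => hleave a (mem_filter.1 ha).1 (mem_filter.1 ha).2]
    at hP_leave
  rw [filter_false_of_mem fun a ha => not_not.2 <|
    hleave a (mem_filter.1 ha).1 (mem_filter.1 ha).2, card_empty] at hnotP_leave
  omega

end Finset

theorem card_filter_fin_sub_eq_card_filter_Ico (k : ℕ) (Q : ℤ → Prop) [DecidablePred Q] :
    #{m : Fin (2 * k) | Q (m - k)} = #{i ∈ Ico (-(k : ℤ)) k | Q i} := by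
  refine card_bij (fun m _ => (m : ℤ) - k) ?_ ?_ ?_
  · intro m hm
    simp only [mem_filter, mem_univ, true_and, mem_Ico] at hm ⊢
    exact ⟨⟨by omega, by omega⟩, hm⟩
  · intro m _ m' _ h
    exact Fin.ext (by omega)
  · intro i hi
    simp only [mem_filter, mem_Ico] at hi
    refine ⟨⟨(i + k).toNat, by omega⟩, ?_, by simp only; omega⟩
    simp only [mem_filter, mem_univ, true_and]
    convert hi.2
    omega

section Diamond

variable {n : ℕ}

theorem mem_aztec_iff {p : ℤ × ℤ} :
    p ∈ aztec n ↔ p.1 + p.2 + 1 ≤ n ∧ p.1 - p.2 ≤ n ∧ p.2 - p.1 ≤ n ∧ -n ≤ p.1 + p.2 + 1 := by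
  simp only [aztec, Set.mem_ofPred]
  grind

theorem swap_mem_aztec {p : ℤ × ℤ} (hp : p ∈ aztec n) : p.swap ∈ aztec n := by
  rw [mem_aztec_iff] at hp ⊢
  simp only [Prod.fst_swap, Prod.snd_swap]
  omega

theorem diag_mem_aztec_iff {i : ℤ} :
    (i, i) ∈ aztec n ↔ i ∈ Ico (-(((n + 1) / 2 : ℕ) : ℤ)) ((n + 1) / 2 : ℕ) := by
  rw [mem_aztec_iff, mem_Ico]
  omega

variable (n) in
theorem aztec_finite : (aztec n).Finite :=
  (Set.finite_Icc (-(n : ℤ), -(n : ℤ)) (n, n)).subset fun p hp => by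
    rw [mem_aztec_iff] at hp
    simp only [Set.mem_Icc, Prod.le_def]
    omega

variable (n) in
noncomputable def aztecFinset : Finset (ℤ × ℤ) := (aztec_finite n).toFinset

theorem mem_aztecFinset {p : ℤ × ℤ} : p ∈ aztecFinset n ↔ p ∈ aztec n :=
  (aztec_finite n).mem_toFinset

variable (n) in
theorem card_diag_aztecFinset : #{p ∈ aztecFinset n | p.1 = p.2} = 2 * ((n + 1) / 2) := by
  have hdiag : {p ∈ aztecFinset n | p.1 = p.2}
      = (Ico (-(((n + 1) / 2 : ℕ) : ℤ)) ((n + 1) / 2 : ℕ)).image fun i => (i, i) := by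
    ext ⟨i, j⟩
    simp only [mem_filter, mem_image, Prod.mk.injEq, mem_aztecFinset]
    constructor
    · rintro ⟨hmem, rfl⟩
      exact ⟨i, diag_mem_aztec_iff.1 hmem, rfl, rfl⟩
    · rintro ⟨i, hi, rfl, rfl⟩
      exact ⟨diag_mem_aztec_iff.2 hi, rfl⟩
  rw [hdiag, card_image_of_injective _ fun i j h => congrArg Prod.fst h, Int.card_Ico]
  omega

variable (n) in
noncomputable def belowDiag : Finset (ℤ × ℤ) := {p ∈ aztecFinset n | p.2 < p.1}

theorem mem_belowDiag {p : ℤ × ℤ} : p ∈ belowDiag n ↔ p ∈ aztec n ∧ p.2 < p.1 := by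
  rw [belowDiag, mem_filter, mem_aztecFinset]

variable (n) in
theorem card_odd_belowDiag :
    #{p ∈ belowDiag n | (p.1 + p.2) % 2 = 1}
      = #{p ∈ belowDiag n | ¬ (p.1 + p.2) % 2 = 1} + (n + 1) / 2 := by
  have hbalanced : #{p ∈ aztecFinset n | (p.1 + p.2) % 2 = 1}
      = #{p ∈ aztecFinset n | ¬ (p.1 + p.2) % 2 = 1} := by
    refine card_filter_eq_card_filter_not_of_involution (fun p => (-1 - p.1, p.2))
      (fun p hp => ?_) (fun p _ => by simp) (fun p _ => by omega)
    rw [mem_aztecFinset, mem_aztec_iff] at hp ⊢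
    omega
  have hsymm (R : ℤ × ℤ → Prop) [DecidablePred R] (hR : ∀ p, R p.swap ↔ R p) :
      ∀ p ∈ {p ∈ aztecFinset n | R p}, p.swap ∈ {p ∈ aztecFinset n | R p} := by
    intro p hp
    rw [mem_filter, mem_aztecFinset] at hp ⊢
    exact ⟨swap_mem_aztec hp.1, (hR p).2 hp.2⟩
  have hodd := card_eq_two_mul_card_filter_lt_add_card_filter_eq
    (hsymm (fun p => (p.1 + p.2) % 2 = 1) fun p => by simp [add_comm])
  have heven := card_eq_two_mul_card_filter_lt_add_card_filter_eq
    (hsymm (fun p => ¬ (p.1 + p.2) % 2 = 1) fun p => by simp [add_comm])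
  have hdiag_odd : {p ∈ {p ∈ aztecFinset n | (p.1 + p.2) % 2 = 1} | p.1 = p.2} = ∅ :=
    filter_false_of_mem fun p hp hdiag => by rw [mem_filter] at hp; omega
  have hdiag_even : {p ∈ {p ∈ aztecFinset n | ¬ (p.1 + p.2) % 2 = 1} | p.1 = p.2}
      = {p ∈ aztecFinset n | p.1 = p.2} := by
    rw [filter_comm, filter_true_of_mem fun p hp => by rw [mem_filter] at hp; omega]
  rw [hdiag_odd, card_empty] at hodd
  rw [hdiag_even, card_diag_aztecFinset] at heven
  simp only [belowDiag, filter_comm (fun p : ℤ × ℤ => p.2 < p.1)]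
  omega

end Diamond

namespace Tiling

variable {n : ℕ} (T : Tiling n)

theorem t_eq_neighbor {p : ℤ × ℤ} (hp : p ∈ aztec n) :
    T.t p = (p.1 + 1, p.2) ∨ T.t p = (p.1 - 1, p.2) ∨ T.t p = (p.1, p.2 + 1) ∨
      T.t p = (p.1, p.2 - 1) := by
  have h := T.adj p hp
  rcases hq : T.t p with ⟨a, b⟩
  rw [hq] at h
  simp only [Prod.mk.injEq] at h ⊢
  grind

theorem odd_t_iff {p : ℤ × ℤ} (hp : p ∈ aztec n) :
    ((T.t p).1 + (T.t p).2) % 2 = 1 ↔ ¬ (p.1 + p.2) % 2 = 1 := by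
  rcases T.t_eq_neighbor hp with h | h | h | h <;> rw [h] <;> omega

theorem t_fst_eq_snd_of_t_not_mem_belowDiag {p : ℤ × ℤ} (hp : p ∈ belowDiag n)
    (ht : T.t p ∉ belowDiag n) : (T.t p).1 = (T.t p).2 := by
  rw [mem_belowDiag] at hp ht
  have hle : (T.t p).1 ≤ (T.t p).2 := not_lt.1 fun hlt => ht ⟨T.mem_aztec p hp.1, hlt⟩
  rcases T.t_eq_neighbor hp.1 with h | h | h | h <;> rw [h] at hle ⊢ <;> omega

theorem odd_of_t_not_mem_belowDiag {p : ℤ × ℤ} (hp : p ∈ belowDiag n)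
    (ht : T.t p ∉ belowDiag n) : (p.1 + p.2) % 2 = 1 := by
  have hdiag := T.t_fst_eq_snd_of_t_not_mem_belowDiag hp ht
  have hodd := T.odd_t_iff (mem_belowDiag.1 hp).1
  omega

theorem card_filter_t_not_mem_belowDiag :
    #{p ∈ belowDiag n | T.t p ∉ belowDiag n} = (n + 1) / 2 := by
  have hexcess := card_odd_belowDiag n
  have hcross := card_filter_eq_card_filter_not_add_card_filter_not_mem T.t
    (fun p hp => T.invol p (mem_belowDiag.1 hp).1) (fun p hp => T.odd_t_iff (mem_belowDiag.1 hp).1)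
    fun p hp ht => T.odd_of_t_not_mem_belowDiag hp ht
  omega

def IsZig (i : ℤ) : Prop := T.t (i, i) = (i + 1, i) ∨ T.t (i, i) = (i, i - 1)

def IsZag (i : ℤ) : Prop := T.t (i, i) = (i - 1, i) ∨ T.t (i, i) = (i, i + 1)

instance : DecidablePred T.IsZig := fun _ => inferInstanceAs (Decidable (_ ∨ _))

instance : DecidablePred T.IsZag := fun _ => inferInstanceAs (Decidable (_ ∨ _))

theorem isZig_iff_t_mem_belowDiag {i : ℤ} (hi : (i, i) ∈ aztec n) :
    T.IsZig i ↔ T.t (i, i) ∈ belowDiag n := by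
  rw [IsZig, mem_belowDiag, and_iff_right (T.mem_aztec _ hi)]
  rcases T.t_eq_neighbor hi with h | h | h | h <;> simp [h] <;> omega

theorem isZag_iff_not_isZig {i : ℤ} (hi : (i, i) ∈ aztec n) : T.IsZag i ↔ ¬ T.IsZig i := by
  rw [IsZag, IsZig]
  rcases T.t_eq_neighbor hi with h | h | h | h <;> simp [h] <;> omega

theorem card_isZig :
    #{i ∈ Ico (-(((n + 1) / 2 : ℕ) : ℤ)) ((n + 1) / 2 : ℕ) | T.IsZig i} = (n + 1) / 2 := by
  refine Eq.trans ?_ T.card_filter_t_not_mem_belowDiag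
  apply card_nbij' (fun i => T.t (i, i)) (fun p => (T.t p).1)
  · intro i hi
    simp only [coe_filter, Set.mem_ofPred] at hi ⊢
    have hi' := diag_mem_aztec_iff.2 hi.1
    refine ⟨(T.isZig_iff_t_mem_belowDiag hi').1 hi.2, ?_⟩
    rw [T.invol _ hi', mem_belowDiag]
    exact fun h => lt_irrefl i h.2
  · intro p hp
    simp only [coe_filter, Set.mem_ofPred] at hp ⊢
    have hpA := (mem_belowDiag.1 hp.1).1
    have hdiag : ((T.t p).1, (T.t p).1) = T.t p :=
      Prod.ext rfl (T.t_fst_eq_snd_of_t_not_mem_belowDiag hp.1 hp.2)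
    have htA : ((T.t p).1, (T.t p).1) ∈ aztec n := hdiag ▸ T.mem_aztec p hpA
    refine ⟨diag_mem_aztec_iff.1 htA, (T.isZig_iff_t_mem_belowDiag htA).2 ?_⟩
    rw [hdiag, T.invol p hpA]
    exact hp.1
  · intro i hi
    simp only [coe_filter, Set.mem_ofPred] at hi
    simp only [T.invol _ (diag_mem_aztec_iff.2 hi.1)]
  · intro p hp
    simp only [coe_filter, Set.mem_ofPred] at hp
    have hdiag : ((T.t p).1, (T.t p).1) = T.t p :=
      Prod.ext rfl (T.t_fst_eq_snd_of_t_not_mem_belowDiag hp.1 hp.2)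
    simp only [hdiag, T.invol p (mem_belowDiag.1 hp.1).1]

theorem card_isZag :
    #{i ∈ Ico (-(((n + 1) / 2 : ℕ) : ℤ)) ((n + 1) / 2 : ℕ) | T.IsZag i} = (n + 1) / 2 := by
  have hspine := card_filter_add_card_filter_not
    (s := Ico (-(((n + 1) / 2 : ℕ) : ℤ)) ((n + 1) / 2 : ℕ)) T.IsZig
  rw [T.card_isZig, Int.card_Ico] at hspine
  rw [filter_congr fun i hi => T.isZag_iff_not_isZig (diag_mem_aztec_iff.2 hi)]
  omega

end Tiling

theorem spine_zigs_eq_zags_general (n : ℕ) (T : Tiling n) :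
    (Finset.univ.filter (fun m : Fin (2 * ((n + 1) / 2)) =>
      (fun i : ℤ => T.t (i, i) = (i + 1, i) ∨ T.t (i, i) = (i, i - 1))
        ((m : ℤ) - ((n + 1) / 2 : ℕ)))).card = (n + 1) / 2
    ∧ (Finset.univ.filter (fun m : Fin (2 * ((n + 1) / 2)) =>
      (fun i : ℤ => T.t (i, i) = (i - 1, i) ∨ T.t (i, i) = (i, i + 1))
        ((m : ℤ) - ((n + 1) / 2 : ℕ)))).card = (n + 1) / 2 :=
  ⟨(card_filter_fin_sub_eq_card_filter_Ico _ T.IsZig).trans T.card_isZig,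
    (card_filter_fin_sub_eq_card_filter_Ico _ T.IsZag).trans T.card_isZag⟩

/-- Let `k = ⌈n/2⌉`; the spine consists of the `2k` squares `(i, i)` with
`i = m - k` for `m = 0, ..., 2k - 1`.  In any domino tiling, the induced
sequence of zigs and zags along the spine (a zig at a spine square when its
domino extends to the right or down, a zag when it extends to the left or up)
contains exactly `k` zigs and exactly `k` zags. -/
theorem spine_zigs_eq_zags (n : ℕ) (hn : 0 < n) (T : Tiling n) :
    (Finset.univ.filter (fun m : Fin (2 * ((n + 1) / 2)) =>
      (fun i : ℤ => T.t (i, i) = (i + 1, i) ∨ T.t (i, i) = (i, i - 1))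
        ((m : ℤ) - ((n + 1) / 2 : ℕ)))).card = (n + 1) / 2
    ∧ (Finset.univ.filter (fun m : Fin (2 * ((n + 1) / 2)) =>
      (fun i : ℤ => T.t (i, i) = (i - 1, i) ∨ T.t (i, i) = (i, i + 1))
        ((m : ℤ) - ((n + 1) / 2 : ℕ)))).card = (n + 1) / 2 :=
  spine_zigs_eq_zags_general n T
end

section
/- Let λ = (a_k - k, ..., a_1 - 1) for a_1 < ... < a_k. The Schur polynomial s_λ(x_1,...,x_k) equals the k×k determinant whose (i,j) entry is h_{a_{k+1-i} - k + j - 1}(x_1,...,x_k), where h_m denotes the complete homogeneous symmetric polynomial of degree m (with h_m = 0 for m < 0); equivalently, the Jacobi–Trudi identity holds for this shape. -/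
/-!
Put `E_q(t) = ∏_{i ≠ q} (1 - x_i t)` and `H(t) = ∑ h_n t^n = ∏_i (1 - x_i t)⁻¹`. Then
`E_q(t) H(t) = (1 - x_q t)⁻¹`, and since `E_q` has degree `< k`, comparing coefficients of `t^n`
gives `x_q^n = ∑_{r < k} [t^r] E_q · h_{n-r}`. In matrix form,
`(h_{b_i - k + 1 + j})_{i j} · ([t^{k-1-j}] E_q)_{j q} = (x_q^{b_i})_{i q}` for every exponent
vector `b`. For `b_i = k - 1 - i` the first factor is unitriangular, so the determinant of the
second factor is the Vandermonde product `∏_{i<j} (x_i - x_j)`; taking determinants at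
`b_i = a_{k-i} - 1` gives the identity.
-/

open Finset MvPolynomial

/-- `h_m` for `m : ℤ`: the complete homogeneous symmetric polynomial of degree
`m` in the variables `x₁, ..., x_k`, with `h_m = 0` for `m < 0`. -/
noncomputable def hZ (k : ℕ) (m : ℤ) : MvPolynomial (Fin k) ℚ :=
  if 0 ≤ m then MvPolynomial.hsymm (Fin k) ℚ m.toNat else 0

namespace PowerSeries

theorem one_sub_C_mul_X_mul_mk_pow {R : Type*} [CommRing R] (a : R) :
    (1 - C a * X) * mk (a ^ ·) = 1 := by
  have : mk (a ^ ·) = rescale a (mk 1) := by ext; simp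
  rw [this, ← rescale_X, ← map_one (rescale a), ← map_sub, ← map_mul, mul_comm,
    mk_one_mul_one_sub_eq_one, map_one]

end PowerSeries

namespace MvPolynomial

variable {σ R : Type*}

noncomputable def elemSeries [CommRing R] (s : Finset σ) : PowerSeries (MvPolynomial σ R) :=
  ∏ i ∈ s, (1 - PowerSeries.C (X i) * PowerSeries.X)

theorem coeff_elemSeries_of_card_lt [CommRing R] [DecidableEq σ] {s : Finset σ} {r : ℕ}
    (h : #s < r) : PowerSeries.coeff r (elemSeries (R := R) s) = 0 := by
  induction s using Finset.induction_on generalizing r with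
  | empty =>
    rw [elemSeries, prod_empty, PowerSeries.coeff_one, if_neg (by simp at h; omega)]
  | insert a s ha ih =>
    rw [card_insert_of_notMem ha] at h
    obtain ⟨r, rfl⟩ := Nat.exists_eq_add_of_lt h
    rw [elemSeries, prod_insert ha, ← elemSeries, sub_mul, one_mul, mul_assoc, map_sub,
      PowerSeries.coeff_C_mul, PowerSeries.coeff_succ_X_mul, ih (by omega), ih (by omega),
      mul_zero, sub_zero]

variable [Fintype σ] [DecidableEq σ]

theorem hsymm_eq_sum_finsuppAntidiag [CommSemiring R] (n : ℕ) :
    hsymm σ R n = ∑ l ∈ finsuppAntidiag univ n, ∏ i, X i ^ l i := by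
  have hcard (l : σ →₀ ℕ) : Multiset.card (Finsupp.toMultiset l) = ∑ i, l i := by
    rw [Finsupp.card_toMultiset, Finsupp.sum_fintype _ _ fun _ => rfl]; rfl
  rw [hsymm]
  refine sum_bij' (fun s _ => Multiset.toFinsupp s.1)
    (fun l hl => ⟨Finsupp.toMultiset l, by rw [hcard]; exact (mem_finsuppAntidiag.1 hl).1⟩)
    (fun s _ => ?_) (fun _ _ => mem_univ _) (fun _ _ => Subtype.ext (by simp)) (fun _ _ => by simp)
    (fun s _ => ?_)
  · simp [mem_finsuppAntidiag, ← hcard]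
  · rw [prod_multiset_map_count]
    exact prod_subset (subset_univ _) fun i _ hi => by
      rw [Multiset.mem_toFinset, ← Multiset.count_eq_zero] at hi
      rw [hi, pow_zero]

theorem prod_mk_X_pow_eq_mk_hsymm [CommSemiring R] :
    ∏ i, PowerSeries.mk (fun n => (X i : MvPolynomial σ R) ^ n) =
      PowerSeries.mk (hsymm σ R) := by
  ext n
  simp only [PowerSeries.coeff_prod, PowerSeries.coeff_mk, hsymm_eq_sum_finsuppAntidiag]

variable [CommRing R]

theorem elemSeries_univ_mul_mk_hsymm : elemSeries univ * PowerSeries.mk (hsymm σ R) = 1 := by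
  rw [elemSeries, ← prod_mk_X_pow_eq_mk_hsymm, ← prod_mul_distrib]
  exact prod_eq_one fun i _ => PowerSeries.one_sub_C_mul_X_mul_mk_pow _

theorem elemSeries_erase_mul_mk_hsymm (q : σ) :
    elemSeries (univ.erase q) * PowerSeries.mk (hsymm σ R) = PowerSeries.mk (X q ^ ·) := by
  have h_q := PowerSeries.one_sub_C_mul_X_mul_mk_pow (X q : MvPolynomial σ R)
  have h_erase : (1 - PowerSeries.C (X q) * PowerSeries.X) * elemSeries (univ.erase q) =
      elemSeries (R := R) univ :=
    mul_prod_erase _ (fun i => 1 - PowerSeries.C (X i) * PowerSeries.X) (mem_univ q)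
  have h_univ : elemSeries univ * PowerSeries.mk (hsymm σ R) = 1 := elemSeries_univ_mul_mk_hsymm
  linear_combination (-elemSeries (univ.erase q) * PowerSeries.mk (hsymm σ R)) * h_q +
    PowerSeries.mk (X q ^ ·) * (PowerSeries.mk (hsymm σ R) * h_erase + h_univ)

end MvPolynomial

theorem hZ_natCast_sub (k n r : ℕ) :
    hZ k (n - r) = if r ≤ n then hsymm (Fin k) ℚ (n - r) else 0 := by
  by_cases h : r ≤ n
  · rw [hZ, if_pos (by omega), if_pos h]
    congr
    omega
  · rw [hZ, if_neg (by omega), if_neg h]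

theorem coeff_mul_mk_hsymm_eq_sum_hZ {k N : ℕ} {f : PowerSeries (MvPolynomial (Fin k) ℚ)}
    (hf : ∀ r ≥ N, PowerSeries.coeff r f = 0) (n : ℕ) :
    PowerSeries.coeff n (f * PowerSeries.mk (hsymm (Fin k) ℚ)) =
      ∑ r ∈ range N, PowerSeries.coeff r f * hZ k (n - r) := by
  set g : ℕ → MvPolynomial (Fin k) ℚ := fun r => PowerSeries.coeff r f * hZ k (n - r)
  have hg_n : ∀ r ≥ n + 1, g r = 0 := fun r hr => by
    simp only [g, hZ_natCast_sub, if_neg (show ¬r ≤ n by omega), mul_zero]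
  have hg_N : ∀ r ≥ N, g r = 0 := fun r hr => by simp only [g, hf r hr, zero_mul]
  calc PowerSeries.coeff n (f * PowerSeries.mk (hsymm (Fin k) ℚ))
      = ∑ r ∈ range (n + 1), g r := by
        rw [PowerSeries.coeff_mul, Nat.sum_antidiagonal_eq_sum_range_succ_mk]
        refine sum_congr rfl fun r hr => ?_
        simp only [g, PowerSeries.coeff_mk, hZ_natCast_sub,
          if_pos (Nat.lt_succ_iff.mp (mem_range.mp hr))]
    _ = ∑ r ∈ range N, g r :=
        (eventually_constant_sum hg_n le_self_add).symm.trans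
          (eventually_constant_sum hg_N le_add_self)

theorem pow_eq_sum_coeff_elemSeries_mul_hZ {k : ℕ} (q : Fin k) (n : ℕ) :
    (X q : MvPolynomial (Fin k) ℚ) ^ n =
      ∑ r ∈ range k, PowerSeries.coeff r (elemSeries (univ.erase q)) * hZ k (n - r) := by
  have hdeg : ∀ r ≥ k, PowerSeries.coeff r (elemSeries (R := ℚ) (univ.erase q)) = 0 :=
    fun r hr => coeff_elemSeries_of_card_lt <| by
      rw [card_erase_of_mem (mem_univ q), card_fin]
      have hq := q.pos
      omega
  rw [← coeff_mul_mk_hsymm_eq_sum_hZ hdeg, elemSeries_erase_mul_mk_hsymm, PowerSeries.coeff_mk]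

section JacobiTrudi

variable {k : ℕ}

/-- As `j.rev = k - 1 - j`, row `i` is `h_{b_i - k + 1}, …, h_{b_i}`. -/
noncomputable def jacobiTrudiMatrix (b : Fin k → ℕ) :
    Matrix (Fin k) (Fin k) (MvPolynomial (Fin k) ℚ) :=
  .of fun i j => hZ k (b i - j.rev)

noncomputable def alternantMatrix (b : Fin k → ℕ) :
    Matrix (Fin k) (Fin k) (MvPolynomial (Fin k) ℚ) :=
  .of fun i q => X q ^ b i

noncomputable def elemMatrix (k : ℕ) : Matrix (Fin k) (Fin k) (MvPolynomial (Fin k) ℚ) :=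
  .of fun j q => PowerSeries.coeff j.rev (elemSeries (univ.erase q))

theorem jacobiTrudiMatrix_mul_elemMatrix (b : Fin k → ℕ) :
    jacobiTrudiMatrix b * elemMatrix k = alternantMatrix b := by
  ext i q : 1
  rw [alternantMatrix, Matrix.of_apply, pow_eq_sum_coeff_elemSeries_mul_hZ,
    ← Fin.sum_univ_eq_sum_range
      (fun r => PowerSeries.coeff r (elemSeries (univ.erase q)) * hZ k (b i - r)),
    ← Equiv.sum_comp Fin.revPerm, Matrix.mul_apply]
  simp [jacobiTrudiMatrix, elemMatrix, mul_comm]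

theorem det_jacobiTrudiMatrix_rev : (jacobiTrudiMatrix (k := k) fun i => i.rev).det = 1 := by
  have h_triangular : (jacobiTrudiMatrix (k := k) fun i => i.rev).BlockTriangular id :=
    fun i j hji => by
      rw [jacobiTrudiMatrix, Matrix.of_apply, hZ, if_neg]
      have h_rev : i.rev < j.rev := Fin.rev_lt_rev.mpr hji
      omega
  rw [Matrix.det_of_isUpperTriangular h_triangular]
  exact prod_eq_one fun i _ => by simp [jacobiTrudiMatrix, hZ]

theorem det_alternantMatrix_rev :
    (alternantMatrix (k := k) fun i => i.rev).det =
      ∏ p ∈ univ.filter (fun p : Fin k × Fin k => p.1 < p.2), (X p.1 - X p.2) := by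
  have h_vandermonde :
      alternantMatrix (k := k) (fun i => i.rev) = (Matrix.projVandermonde 1 X).transpose := by
    ext i q : 1
    simp [alternantMatrix, Matrix.projVandermonde_apply]
  rw [h_vandermonde, Matrix.det_transpose, Matrix.det_projVandermonde]
  simp only [Pi.one_apply, one_mul]
  exact (prod_finset_product' _ _ _ (by simp)).symm

theorem det_jacobiTrudiMatrix_mul_prod (b : Fin k → ℕ) :
    (jacobiTrudiMatrix b).det *
        ∏ p ∈ univ.filter (fun p : Fin k × Fin k => p.1 < p.2), (X p.1 - X p.2) =
      (alternantMatrix b).det := by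
  rw [← det_alternantMatrix_rev, ← jacobiTrudiMatrix_mul_elemMatrix, Matrix.det_mul,
    det_jacobiTrudiMatrix_rev, one_mul, ← Matrix.det_mul, jacobiTrudiMatrix_mul_elemMatrix]

end JacobiTrudi

/-- Since `s_λ · ∏_{i<j} (x_i - x_j) = det (x_i ^ (λ_j + k - j))` and
`λ_j + k - j = a_{k+1-j} - 1`, the identity is stated with the Schur polynomial cleared of its
denominator. -/
theorem jacobi_trudi (k : ℕ) (A : Finset ℕ) (hA : A.card = k)
    (hpos : ∀ x ∈ A, 1 ≤ x) :
    Matrix.det (Matrix.of fun i j : Fin k =>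
        hZ k ((A.orderEmbOfFin hA ⟨k - 1 - i, by omega⟩ : ℤ) - k + j)) *
      (∏ p ∈ Finset.univ.filter (fun p : Fin k × Fin k => p.1 < p.2),
        ((X p.1 : MvPolynomial (Fin k) ℚ) - X p.2))
    = Matrix.det (Matrix.of fun i j : Fin k =>
        (X i : MvPolynomial (Fin k) ℚ) ^
          (A.orderEmbOfFin hA ⟨k - 1 - j, by omega⟩ - 1)) := by
  set b : Fin k → ℕ := fun i => A.orderEmbOfFin hA ⟨k - 1 - i, by omega⟩ - 1
  have h_jacobiTrudiMatrix : (Matrix.of fun i j : Fin k =>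
      hZ k ((A.orderEmbOfFin hA ⟨k - 1 - i, by omega⟩ : ℤ) - k + j)) =
        jacobiTrudiMatrix b := by
    ext i j : 1
    have ha := hpos _ (A.orderEmbOfFin_mem hA ⟨k - 1 - i, by omega⟩)
    simp only [jacobiTrudiMatrix, b, Matrix.of_apply, Fin.val_rev]
    congr 1
    have hj := j.isLt
    omega
  have h_alternantMatrix : (Matrix.of fun i j : Fin k => (X i : MvPolynomial (Fin k) ℚ) ^
      (A.orderEmbOfFin hA ⟨k - 1 - j, by omega⟩ - 1)) = (alternantMatrix b).transpose := rfl
  rw [h_jacobiTrudiMatrix, h_alternantMatrix, Matrix.det_transpose, det_jacobiTrudiMatrix_mul_prod]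
end
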